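/- arXiv:math/0403364 — 5 statements merged into one kernel-verified Lean document; each statement's English description precedes it below -/
import Mathlib

section
/- Let g and f_1, ..., f_n be real-rooted standard polynomials in ℝ[x]. (i) If for each 1 ≤ i ≤ n we have either g ≪ f_i or g ⪯ f_i, then the sum F = f_1 + f_2 + ... + f_n is real-rooted and satisfies g ⪯ F or g ≪ F (according to the degree of F). (ii) If for each 1 ≤ i ≤ n we have either f_i ≪ g or f_i ⪯ g, then the sum F = f_1 + ... + f_n is real-rooted and satisfies F ⪯ g or F ≪ g (according to the degree of F). -/
/-!
Write `Precedes f g` for `f ⪯ g ∨ f ≪ g`. Counting roots with multiplicity, it says that every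
up-ray `[x, ∞)` or `(x, ∞)` contains at least as many roots of `g` as of `f`, and at most one
more. In this form it is unchanged by a common factor `X - C β`, and for `t` beyond all roots
`Precedes g f ↔ Precedes f ((X - C t) * g)`, which turns part (i) into part (ii).

For (ii) induct on `deg g`, dividing out any root of `g` shared by all `f i`. Otherwise every
root `α` of `g` is simple and each `f i` either vanishes at `α` or has the sign
`(-1) ^ #{roots of g above α}` there, and some `f i` does not vanish. So the sum alternates in
sign along the roots of `g`, and the intermediate value theorem puts one of its roots in each gap
(and, if `deg (∑ f i) = deg g`, one more to the left), which accounts for all of them.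
-/

open Polynomial

/-- All complex zeros of `f` are real (holds trivially for `f = 0`). -/
def AllRootsReal (f : Polynomial ℝ) : Prop := f.roots.card = f.natDegree

/-- `f` is real-rooted: nonzero and all of its complex zeros are real. -/
def RealRooted (f : Polynomial ℝ) : Prop := f ≠ 0 ∧ AllRootsReal f

/-- The `i`-th smallest real zero of `f` (counted with multiplicity). -/
noncomputable def nthRoot (f : Polynomial ℝ) (i : ℕ) : ℝ :=
  (f.roots.sort (· ≤ ·)).getD i 0

/-- `f` interlaces `g` : both are real-rooted, `g` has one more zero than `f`,
and `β₁ ≤ α₁ ≤ β₂ ≤ ⋯ ≤ β_{j-1} ≤ α_{j-1} ≤ β_j`. -/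
def Interlaces (f g : Polynomial ℝ) : Prop :=
  RealRooted f ∧ RealRooted g ∧ g.roots.card = f.roots.card + 1 ∧
  ∀ i < f.roots.card, nthRoot g i ≤ nthRoot f i ∧ nthRoot f i ≤ nthRoot g (i + 1)

/-- `f` alternates left of `g` : both are real-rooted, with equally many zeros,
and `α₁ ≤ β₁ ≤ α₂ ≤ ⋯ ≤ α_i ≤ β_i`. -/
def AlternatesLeft (f g : Polynomial ℝ) : Prop :=
  RealRooted f ∧ RealRooted g ∧ g.roots.card = f.roots.card ∧
  (∀ i < f.roots.card, nthRoot f i ≤ nthRoot g i) ∧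
  (∀ i, i + 1 < f.roots.card → nthRoot g i ≤ nthRoot f (i + 1))

/-- `f` and `g` have no common (real) zero. -/
def NoCommonZero (f g : Polynomial ℝ) : Prop := ∀ x : ℝ, ¬(f.eval x = 0 ∧ g.eval x = 0)

def StrictInterlaces (f g : Polynomial ℝ) : Prop := Interlaces f g ∧ NoCommonZero f g

def StrictAlternatesLeft (f g : Polynomial ℝ) : Prop := AlternatesLeft f g ∧ NoCommonZero f g

open Set Filter

open Classical in
noncomputable def rootCount (U : Set ℝ) (f : ℝ[X]) : ℕ := f.roots.countP (· ∈ U)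

def Precedes (f g : ℝ[X]) : Prop :=
  RealRooted f ∧ RealRooted g ∧ ∀ U : Set ℝ, IsUpperSet U →
    rootCount U f ≤ rootCount U g ∧ rootCount U g ≤ rootCount U f + 1

theorem List.Pairwise.getElem_mem_iff_countP {L : List ℝ} (hL : L.Pairwise (· ≤ ·))
    {U : Set ℝ} [DecidablePred (· ∈ U)] (hU : IsUpperSet U) {j : ℕ} (hj : j < L.length) :
    L[j] ∈ U ↔ L.length - j ≤ L.countP (· ∈ U) := by
  induction L generalizing j with
  | nil => simp at hj
  | cons a l ih =>
    have hle : ∀ x ∈ l, a ≤ x := fun x hx => List.rel_of_pairwise_cons hL hx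
    by_cases ha : a ∈ U
    · have hall : (a :: l).countP (· ∈ U) = (a :: l).length :=
        List.countP_eq_length.2 fun x hx => by
          rcases List.mem_cons.1 hx with rfl | hx
          · simpa using ha
          · simpa using hU (hle x hx) ha
      rw [hall]
      refine ⟨fun _ => by omega, fun _ => ?_⟩
      cases j with
      | zero => exact ha
      | succ j => exact hU (hle _ (List.getElem_mem _)) ha
    · rw [List.countP_cons_of_neg (by simpa using ha)]
      cases j with
      | zero => simpa [ha] using List.countP_le_length
      | succ j =>
        simp only [List.getElem_cons_succ, List.length_cons]
        rw [ih hL.of_cons (by simpa using hj)]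
        omega

theorem nthRoot_eq_getElem {f : ℝ[X]} {j : ℕ} (hj : j < f.roots.card) :
    nthRoot f j = (f.roots.sort (· ≤ ·))[j]'(by rwa [Multiset.length_sort]) :=
  List.getD_eq_getElem _ _ _

theorem nthRoot_mem_iff {f : ℝ[X]} {U : Set ℝ} (hU : IsUpperSet U) {j : ℕ}
    (hj : j < f.roots.card) : nthRoot f j ∈ U ↔ f.roots.card - j ≤ rootCount U f := by
  classical
  have hcount : rootCount U f = (f.roots.sort (· ≤ ·)).countP (· ∈ U) := by
    conv_lhs => rw [rootCount, ← Multiset.sort_eq f.roots (· ≤ ·)]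
    exact Multiset.coe_countP _ _
  rw [nthRoot_eq_getElem hj, hcount, (f.roots.pairwise_sort _).getElem_mem_iff_countP hU,
    Multiset.length_sort]

theorem rootCount_le_card (U : Set ℝ) (f : ℝ[X]) : rootCount U f ≤ f.roots.card := by
  classical exact Multiset.countP_le_card _ _

theorem rootCount_eq_card {U : Set ℝ} {f : ℝ[X]} (h : ∀ r ∈ f.roots, r ∈ U) :
    rootCount U f = f.roots.card :=
  (@Multiset.countP_eq_card _ _ (Classical.decPred _) _).2 h

theorem rootCount_eq_zero {U : Set ℝ} (hU : IsUpperSet U) {a : ℝ} (haU : a ∉ U) {f : ℝ[X]}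
    (h : ∀ r ∈ f.roots, r ≤ a) : rootCount U f = 0 :=
  (@Multiset.countP_eq_zero _ _ (Classical.decPred _) _).2 fun r hr hrU => haU (hU (h r hr) hrU)

-- `h`: the `k`-th largest root of `f` is at most the `(k - c)`-th largest root of `g`.
theorem rootCount_le_rootCount_add {f g : ℝ[X]} {c : ℕ}
    (h : ∀ j, j + c < f.roots.card → f.roots.card ≤ g.roots.card + c + j ∧
      nthRoot f j ≤ nthRoot g (g.roots.card + c + j - f.roots.card))
    {U : Set ℝ} (hU : IsUpperSet U) : rootCount U f ≤ rootCount U g + c := by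
  by_contra! hlt
  have hk := rootCount_le_card U f
  set k := rootCount U f
  obtain ⟨hcard, hle⟩ := h (f.roots.card - k) (by omega)
  have hf : nthRoot f (f.roots.card - k) ∈ U := (nthRoot_mem_iff hU (by omega)).2 (by omega)
  have hg := (nthRoot_mem_iff hU (by omega)).1 (hU hle hf)
  omega

theorem le_nthRoot_of_rootCount_le {f g : ℝ[X]} {c : ℕ}
    (h : ∀ x, rootCount (Ici x) f ≤ rootCount (Ici x) g + c) {j : ℕ}
    (hj : j + c < f.roots.card) :
    f.roots.card ≤ g.roots.card + c + j ∧
      nthRoot f j ≤ nthRoot g (g.roots.card + c + j - f.roots.card) := by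
  set x := nthRoot f j
  have hf := (nthRoot_mem_iff (isUpperSet_Ici x) (by omega)).1 (mem_Ici.2 le_rfl)
  have hx := h x
  have hg := rootCount_le_card (Ici x) g
  exact ⟨by omega, (nthRoot_mem_iff (isUpperSet_Ici x) (by omega)).2 (by omega)⟩

theorem Precedes.card_roots {f g : ℝ[X]} (h : Precedes f g) :
    f.roots.card ≤ g.roots.card ∧ g.roots.card ≤ f.roots.card + 1 := by
  simpa only [rootCount_eq_card fun r _ => mem_univ r] using h.2.2 univ isUpperSet_univ

theorem precedes_iff {f g : ℝ[X]} : Precedes f g ↔ Interlaces f g ∨ AlternatesLeft f g := by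
  constructor
  · intro hfg
    have hcard := hfg.card_roots
    obtain ⟨hf, hg, h⟩ := hfg
    have h₀ := fun j => le_nthRoot_of_rootCount_le (c := 0) (j := j)
      fun x => (h (Ici x) (isUpperSet_Ici x)).1
    have h₁ := fun j => le_nthRoot_of_rootCount_le (c := 1) (j := j)
      fun x => (h (Ici x) (isUpperSet_Ici x)).2
    rcases Nat.lt_or_eq_of_le hcard.1 with hlt | heq
    · refine Or.inl ⟨hf, hg, by omega, fun i hi => ⟨?_, ?_⟩⟩
      · convert (h₁ i (by omega)).2 using 2; omega
      · convert (h₀ i (by omega)).2 using 2; omega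
    · refine Or.inr ⟨hf, hg, heq.symm, fun i hi => ?_, fun i hi => ?_⟩
      · convert (h₀ i (by omega)).2 using 2; omega
      · convert (h₁ i (by omega)).2 using 2; omega
  · rintro (⟨hf, hg, hcard, h⟩ | ⟨hf, hg, hcard, h₀, h₁⟩) <;>
      refine ⟨hf, hg, fun U hU => ⟨rootCount_le_rootCount_add (c := 0) (fun j hj => ?_) hU,
        rootCount_le_rootCount_add (c := 1) (fun j hj => ?_) hU⟩⟩
    · exact ⟨by omega, by convert (h j (by omega)).2 using 2; omega⟩
    · exact ⟨by omega, by convert (h j (by omega)).1 using 2; omega⟩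
    · exact ⟨by omega, by convert h₀ j (by omega) using 2; omega⟩
    · exact ⟨by omega, by convert h₁ j (by omega) using 2; omega⟩

theorem roots_X_sub_C_mul (a : ℝ) {g : ℝ[X]} (hg : g ≠ 0) :
    ((X - C a) * g).roots = a ::ₘ g.roots := by
  rw [roots_mul (mul_ne_zero (X_sub_C_ne_zero a) hg), roots_X_sub_C, Multiset.singleton_add]

theorem rootCount_X_sub_C_mul_of_mem {U : Set ℝ} {a : ℝ} (ha : a ∈ U) {g : ℝ[X]}
    (hg : g ≠ 0) :
    rootCount U ((X - C a) * g) = rootCount U g + 1 := by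
  classical
  rw [rootCount, roots_X_sub_C_mul a hg, Multiset.countP_cons_of_pos _ ha, rootCount]

theorem rootCount_X_sub_C_mul_of_notMem {U : Set ℝ} {a : ℝ} (ha : a ∉ U) {g : ℝ[X]}
    (hg : g ≠ 0) : rootCount U ((X - C a) * g) = rootCount U g := by
  classical
  rw [rootCount, roots_X_sub_C_mul a hg, Multiset.countP_cons_of_neg _ ha, rootCount]

theorem realRooted_X_sub_C_mul_iff {a : ℝ} {g : ℝ[X]} :
    RealRooted ((X - C a) * g) ↔ RealRooted g := by
  by_cases hg : g = 0
  · simp [RealRooted, hg]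
  · simp only [RealRooted, AllRootsReal, roots_X_sub_C_mul a hg, Multiset.card_cons,
      natDegree_mul (X_sub_C_ne_zero a) hg, natDegree_X_sub_C, ne_eq,
      mul_eq_zero, X_sub_C_ne_zero a, hg, or_self, not_false_eq_true, true_and]
    omega

theorem precedes_X_sub_C_mul_iff {a : ℝ} {f g : ℝ[X]} :
    Precedes ((X - C a) * f) ((X - C a) * g) ↔ Precedes f g := by
  simp only [Precedes, realRooted_X_sub_C_mul_iff]
  refine and_congr_right fun hf => and_congr_right fun hg => forall₂_congr fun U _ => ?_
  by_cases ha : a ∈ U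
  · rw [rootCount_X_sub_C_mul_of_mem ha hf.1, rootCount_X_sub_C_mul_of_mem ha hg.1]
    omega
  · rw [rootCount_X_sub_C_mul_of_notMem ha hf.1, rootCount_X_sub_C_mul_of_notMem ha hg.1]

theorem Precedes.of_X_sub_C_mul_right {a : ℝ} {f g : ℝ[X]} (h : Precedes f ((X - C a) * g))
    (ha : ∀ r ∈ g.roots, a ≤ r) (hcard : f.roots.card ≤ g.roots.card) : Precedes f g := by
  obtain ⟨hf, hG, hcount⟩ := h
  have hg := realRooted_X_sub_C_mul_iff.1 hG
  refine ⟨hf, hg, fun U hU => ?_⟩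
  have hfg := hcount U hU
  by_cases haU : a ∈ U
  · have hgU : rootCount U g = g.roots.card := rootCount_eq_card fun r hr => hU (ha r hr) haU
    rw [rootCount_X_sub_C_mul_of_mem haU hg.1, hgU] at hfg
    rw [hgU]
    have := rootCount_le_card U f
    omega
  · rwa [rootCount_X_sub_C_mul_of_notMem haU hg.1] at hfg

theorem precedes_X_sub_C_mul_of_precedes {a : ℝ} {f g : ℝ[X]} (h : Precedes g f)
    (hg : ∀ r ∈ g.roots, r ≤ a) (hf : ∀ r ∈ f.roots, r ≤ a) :
    Precedes f ((X - C a) * g) := by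
  obtain ⟨hg', hf', hcount⟩ := h
  refine ⟨hf', realRooted_X_sub_C_mul_iff.2 hg', fun U hU => ?_⟩
  by_cases haU : a ∈ U
  · rw [rootCount_X_sub_C_mul_of_mem haU hg'.1]
    have := hcount U hU
    omega
  · rw [rootCount_X_sub_C_mul_of_notMem haU hg'.1, rootCount_eq_zero hU haU hg,
      rootCount_eq_zero hU haU hf]
    omega

theorem precedes_of_precedes_X_sub_C_mul {a : ℝ} {f g : ℝ[X]} (h : Precedes f ((X - C a) * g))
    (hg : ∀ r ∈ g.roots, r ≤ a) : Precedes g f := by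
  obtain ⟨hf, hG, hcount⟩ := h
  have hg' := realRooted_X_sub_C_mul_iff.1 hG
  refine ⟨hg', hf, fun U hU => ?_⟩
  have hfg := hcount U hU
  by_cases haU : a ∈ U
  · rw [rootCount_X_sub_C_mul_of_mem haU hg'.1] at hfg
    omega
  · rw [rootCount_X_sub_C_mul_of_notMem haU hg'.1, rootCount_eq_zero hU haU hg] at hfg
    rw [rootCount_eq_zero hU haU hg]
    omega

theorem rootCount_Ici (a : ℝ) (f : ℝ[X]) :
    rootCount (Ici a) f = rootCount (Ioi a) f + f.roots.count a := by
  unfold rootCount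
  induction f.roots using Multiset.induction_on with
  | empty => simp
  | cons b s ih =>
    rw [Multiset.countP_cons, Multiset.countP_cons, Multiset.count_cons, ih]
    rcases lt_trichotomy a b with hab | rfl | hab
    · simp [hab.le, hab, hab.ne]
      omega
    · simp
      omega
    · simp [hab.not_ge, hab.not_gt, hab.ne']

theorem count_roots_eq_zero {f : ℝ[X]} {a : ℝ} (h : ¬f.IsRoot a) : f.roots.count a = 0 :=
  Multiset.count_eq_zero.2 fun ha => h (mem_roots'.1 ha).2

theorem Precedes.count_roots_le {f g : ℝ[X]} (h : Precedes f g) (a : ℝ) :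
    g.roots.count a ≤ f.roots.count a + 1 := by
  have hIci := (h.2.2 _ (isUpperSet_Ici a)).2
  have hIoi := (h.2.2 _ (isUpperSet_Ioi a)).1
  rw [rootCount_Ici, rootCount_Ici] at hIci
  omega

theorem Precedes.rootCount_Ioi_eq {f g : ℝ[X]} (h : Precedes f g) {a : ℝ}
    (hg : g.roots.count a = 1) (hf : f.roots.count a = 0) :
    rootCount (Ioi a) f = rootCount (Ioi a) g := by
  have hIci := (h.2.2 _ (isUpperSet_Ici a)).2
  have hIoi := (h.2.2 _ (isUpperSet_Ioi a)).1
  rw [rootCount_Ici, rootCount_Ici] at hIci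
  omega

theorem neg_one_pow_rootCount_mul_eval_nonneg {f : ℝ[X]} (hf : RealRooted f)
    (hlc : 0 < f.leadingCoeff) (x : ℝ) : 0 ≤ (-1) ^ rootCount (Ioi x) f * f.eval x := by
  have hprod (s : Multiset ℝ) :
      0 ≤ (-1) ^ s.countP (· ∈ Ioi x) * (s.map (x - ·)).prod := by
    induction s using Multiset.induction_on with
    | empty => simp
    | cons a s ih =>
      rw [Multiset.countP_cons, Multiset.map_cons, Multiset.prod_cons]
      split_ifs with ha
      · calc (0 : ℝ) ≤ (a - x) * ((-1) ^ s.countP (· ∈ Ioi x) * (s.map (x - ·)).prod) :=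
              mul_nonneg (by linarith [mem_Ioi.1 ha]) ih
          _ = _ := by ring
      · calc (0 : ℝ) ≤ (x - a) * ((-1) ^ s.countP (· ∈ Ioi x) * (s.map (x - ·)).prod) :=
              mul_nonneg (by linarith [not_lt.1 (show ¬x < a from ha)]) ih
          _ = _ := by ring
  have heval : f.eval x = f.leadingCoeff * (f.roots.map (x - ·)).prod := by
    conv_lhs => rw [← C_leadingCoeff_mul_prod_multiset_X_sub_C hf.2]
    simp [eval_multiset_prod, Multiset.map_map]
  rw [heval, mul_left_comm]
  refine mul_nonneg hlc.le ?_
  unfold rootCount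
  exact hprod f.roots

theorem Precedes.neg_one_pow_rootCount_mul_eval_pos {f g : ℝ[X]} (h : Precedes f g)
    (hlc : 0 < f.leadingCoeff) {a : ℝ} (hg : g.roots.count a = 1) (hfa : ¬f.IsRoot a) :
    0 < (-1) ^ rootCount (Ioi a) g * f.eval a := by
  rw [← h.rootCount_Ioi_eq hg (count_roots_eq_zero hfa)]
  exact (neg_one_pow_rootCount_mul_eval_nonneg h.1 hlc a).lt_of_ne
    (mul_ne_zero (pow_ne_zero _ (by norm_num)) hfa).symm

theorem nthRoot_mem_roots {f : ℝ[X]} {j : ℕ} (hj : j < f.roots.card) :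
    nthRoot f j ∈ f.roots := by
  rw [nthRoot_eq_getElem hj, ← Multiset.mem_sort (· ≤ ·)]
  exact List.getElem_mem _

theorem nthRoot_strictMonoOn {f : ℝ[X]} (hf : f.roots.Nodup) :
    StrictMonoOn (nthRoot f) (Iio f.roots.card) := by
  intro i hi j hj hij
  have hsorted : (f.roots.sort (· ≤ ·)).SortedLT :=
    (f.roots.pairwise_sort _).sortedLE.sortedLT_of_nodup
      (Multiset.coe_nodup.1 (by rwa [Multiset.sort_eq]))
  rw [nthRoot_eq_getElem hi, nthRoot_eq_getElem hj]
  exact hsorted.getElem_lt_getElem_iff.2 hij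

theorem rootCount_Ioi_nthRoot {f : ℝ[X]} (hf : f.roots.Nodup) {j : ℕ}
    (hj : j < f.roots.card) : rootCount (Ioi (nthRoot f j)) f = f.roots.card - 1 - j := by
  have hlt : ¬f.roots.card - j ≤ rootCount (Ioi (nthRoot f j)) f :=
    fun h => lt_irrefl (nthRoot f j) ((nthRoot_mem_iff (isUpperSet_Ioi _) hj).2 h)
  rcases Nat.lt_or_ge (j + 1) f.roots.card with hj' | hj'
  · have := (nthRoot_mem_iff (isUpperSet_Ioi _) hj').1
      (nthRoot_strictMonoOn hf hj hj' j.lt_succ_self)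
    omega
  · omega

theorem exists_isRoot_mem_Ioo {F : ℝ[X]} {a b : ℝ} (hab : a ≤ b)
    (h : F.eval a * F.eval b < 0) : ∃ r ∈ Ioo a b, F.IsRoot r := by
  rcases mul_neg_iff.1 h with ⟨ha, hb⟩ | ⟨ha, hb⟩
  · exact intermediate_value_Ioo' hab F.continuous.continuousOn ⟨hb, ha⟩
  · exact intermediate_value_Ioo hab F.continuous.continuousOn ⟨ha, hb⟩

theorem mul_neg_of_neg_one_pow_mul_pos {a b : ℝ} {e : ℕ} (ha : 0 < (-1) ^ (e + 1) * a)
    (hb : 0 < (-1) ^ e * b) : a * b < 0 := by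
  rcases neg_one_pow_eq_or ℝ e with he | he <;> rw [pow_succ, he] at ha <;> rw [he] at hb <;>
    nlinarith

theorem realRooted_of_strictMonoOn_isRoot {F : ℝ[X]} (hF : F ≠ 0) {r : ℕ → ℝ}
    (hr : StrictMonoOn r (Iio F.natDegree)) (hroot : ∀ j < F.natDegree, F.IsRoot (r j)) :
    RealRooted F ∧ ∀ j < F.natDegree, nthRoot F j = r j := by
  set L := (List.range F.natDegree).map r
  have hL : L.Pairwise (· < ·) := List.pairwise_map.2 <| List.pairwise_lt_range.imp_of_mem
    fun hi hj hij => hr (mem_Iio.2 (List.mem_range.1 hi)) (mem_Iio.2 (List.mem_range.1 hj)) hij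
  have hroots : F.roots = L := by
    refine (Multiset.eq_of_le_of_card_le ?_ ?_).symm
    · refine (Multiset.le_iff_subset (Multiset.coe_nodup.2 hL.nodup)).2 fun x hx => ?_
      obtain ⟨j, hj, rfl⟩ := List.mem_map.1 (Multiset.mem_coe.1 hx)
      exact (mem_roots hF).2 (hroot j (List.mem_range.1 hj))
    · simpa [L] using F.card_roots'
  have hsort : F.roots.sort (· ≤ ·) = L := by
    rw [hroots, Multiset.coe_sort, List.mergeSort_eq_self _ (hL.imp le_of_lt)]
  refine ⟨⟨hF, by simp [AllRootsReal, hroots, L]⟩, fun j hj => ?_⟩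
  simp [nthRoot, hsort, L, hj]

theorem interlaces_of_sign_alternation {F G : ℝ[X]} (hG : RealRooted G) (hnd : G.roots.Nodup)
    (hdeg : F.natDegree + 1 = G.natDegree)
    (hsign : ∀ a ∈ G.roots, 0 < (-1) ^ rootCount (Ioi a) G * F.eval a) : Interlaces F G := by
  have hcard : G.roots.card = F.natDegree + 1 := hG.2.trans hdeg.symm
  have hsign' : ∀ j < G.roots.card, 0 < (-1) ^ (F.natDegree - j) * F.eval (nthRoot G j) :=
    fun j hj => by
      have := hsign _ (nthRoot_mem_roots hj)
      rwa [rootCount_Ioi_nthRoot hnd hj, hcard, Nat.add_sub_cancel] at this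
  have hF : F ≠ 0 := by
    rintro rfl
    simpa using hsign' 0 (by omega)
  have hex : ∀ j, ∃ r, j < F.natDegree →
      r ∈ Ioo (nthRoot G j) (nthRoot G (j + 1)) ∧ F.IsRoot r := by
    intro j
    by_cases hj : j < F.natDegree
    · have hlt := nthRoot_strictMonoOn hnd (by simp; omega) (by simp; omega) j.lt_succ_self
      obtain ⟨r, hr, hroot⟩ := exists_isRoot_mem_Ioo hlt.le <| mul_neg_of_neg_one_pow_mul_pos
        (by convert hsign' j (by omega) using 3; omega) (hsign' (j + 1) (by omega))
      exact ⟨r, fun _ => ⟨hr, hroot⟩⟩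
    · exact ⟨0, fun h => absurd h hj⟩
  choose r hr using hex
  have hmono : StrictMonoOn r (Iio F.natDegree) := fun i hi j hj hij =>
    calc r i < nthRoot G (i + 1) := ((hr i hi).1).2
      _ ≤ nthRoot G j := (nthRoot_strictMonoOn hnd).monotoneOn (by simp at hi ⊢; omega)
          (by simp at hj ⊢; omega) hij
      _ < r j := ((hr j hj).1).1
  obtain ⟨hFrr, hnth⟩ := realRooted_of_strictMonoOn_isRoot hF hmono fun j hj => (hr j hj).2
  have hFcard : F.roots.card = F.natDegree := hFrr.2
  refine ⟨hFrr, hG, by omega, fun j hj => ?_⟩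
  rw [hFcard] at hj
  rw [hnth j hj]
  exact ⟨((hr j hj).1).1.le, ((hr j hj).1).2.le⟩

theorem eventually_atBot_neg_one_pow_mul_eval_pos {P : ℝ[X]} (hP : 0 < P.leadingCoeff) :
    ∀ᶠ x in atBot, 0 < (-1) ^ P.natDegree * P.eval x := by
  have h := (Asymptotics.IsEquivalent.refl (u := fun _ : ℝ => (-1 : ℝ) ^ P.natDegree)).mul
    P.isEquivalent_atBot_lead
  refine h.eventually_pos ((eventually_lt_atBot 0).mono fun x hx => ?_)
  have : 0 < P.leadingCoeff * (-x) ^ P.natDegree := mul_pos hP (pow_pos (by linarith) _)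
  rw [neg_pow] at this
  simp only [Pi.mul_apply]
  linarith

theorem eventually_atBot_forall_lt_roots (p : ℝ[X]) :
    ∀ᶠ x in atBot, ∀ r ∈ p.roots, x < r :=
  ((eventually_all_finset p.roots.toFinset).2 fun r _ => eventually_lt_atBot r).mono
    fun _ hx r hr => hx r (Multiset.mem_toFinset.2 hr)

theorem eventually_atTop_forall_roots_le (p : ℝ[X]) :
    ∀ᶠ x in atTop, ∀ r ∈ p.roots, r ≤ x :=
  ((eventually_all_finset p.roots.toFinset).2 fun r _ => eventually_ge_atTop r).mono
    fun _ hx r hr => hx r (Multiset.mem_toFinset.2 hr)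

theorem precedes_of_sign_alternation {F G : ℝ[X]} (hF : 0 < F.leadingCoeff) (hG : RealRooted G)
    (hnd : G.roots.Nodup) (hdeg : F.natDegree + 1 = G.natDegree ∨ F.natDegree = G.natDegree)
    (hsign : ∀ a ∈ G.roots, 0 < (-1) ^ rootCount (Ioi a) G * F.eval a) : Precedes F G := by
  rcases hdeg with hdeg | hdeg
  · exact precedes_iff.2 (Or.inl (interlaces_of_sign_alternation hG hnd hdeg hsign))
  obtain ⟨s, hsF, hsG⟩ := ((eventually_atBot_neg_one_pow_mul_eval_pos hF).and
    (eventually_atBot_forall_lt_roots G)).exists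
  have hroots := roots_X_sub_C_mul s hG.1
  have hinter : Interlaces F ((X - C s) * G) := by
    refine interlaces_of_sign_alternation (realRooted_X_sub_C_mul_iff.2 hG) ?_ ?_ fun a ha => ?_
    · rw [hroots]
      exact Multiset.nodup_cons.2 ⟨fun h => lt_irrefl s (hsG s h), hnd⟩
    · rw [natDegree_mul (X_sub_C_ne_zero s) hG.1, natDegree_X_sub_C, hdeg, add_comm]
    · rw [hroots, Multiset.mem_cons] at ha
      rcases ha with rfl | ha
      · rwa [rootCount_X_sub_C_mul_of_notMem (U := Ioi a) (lt_irrefl a) hG.1,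
          rootCount_eq_card (U := Ioi a) hsG, hG.2, ← hdeg]
      · rw [rootCount_X_sub_C_mul_of_notMem (U := Ioi a) (hsG a ha).not_gt hG.1]
        exact hsign a ha
  have hcard : F.roots.card = F.natDegree := hinter.1.2
  exact (precedes_iff.2 (Or.inl hinter)).of_X_sub_C_mul_right (fun r hr => (hsG r hr).le)
    (by rw [hcard, hdeg, hG.2])

theorem exists_natDegree_sum_eq {ι : Type*} [Fintype ι] [Nonempty ι] {f : ι → ℝ[X]}
    (hf : ∀ i, 0 < (f i).leadingCoeff) :
    ∃ i, (∑ j, f j).natDegree = (f i).natDegree ∧ 0 < (∑ j, f j).leadingCoeff := by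
  obtain ⟨i, hi⟩ := Finite.exists_max fun j => (f j).natDegree
  have hcoeff : 0 < (∑ j, f j).coeff (f i).natDegree := by
    rw [finsetSum_coeff]
    refine Finset.sum_pos' (fun j _ => ?_) ⟨i, Finset.mem_univ _, hf i⟩
    rcases (hi j).lt_or_eq with h | h
    · rw [coeff_eq_zero_of_natDegree_lt h]
    · rw [← h]
      exact (hf j).le
  have hdeg : (∑ j, f j).natDegree = (f i).natDegree :=
    (natDegree_sum_le_of_forall_le _ _ fun j _ => hi j).antisymm
      (le_natDegree_of_ne_zero hcoeff.ne')
  exact ⟨i, hdeg, by rwa [leadingCoeff, hdeg]⟩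

theorem precedes_sum_of_forall_exists_not_isRoot {ι : Type*} [Fintype ι] [Nonempty ι]
    {f : ι → ℝ[X]} {g : ℝ[X]} (hlc : ∀ i, 0 < (f i).leadingCoeff)
    (h : ∀ i, Precedes (f i) g)
    (hg : ∀ a ∈ g.roots, ∃ i, ¬(f i).IsRoot a) : Precedes (∑ i, f i) g := by
  have hgrr := (h (Classical.arbitrary ι)).2.1
  have hnd : g.roots.Nodup := Multiset.nodup_iff_count_le_one.2 fun a => by
    by_cases ha : a ∈ g.roots
    · obtain ⟨i, hi⟩ := hg a ha
      simpa [count_roots_eq_zero hi] using (h i).count_roots_le a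
    · simp [Multiset.count_eq_zero.2 ha]
  obtain ⟨i₀, hdeg, hFlc⟩ := exists_natDegree_sum_eq hlc
  refine precedes_of_sign_alternation hFlc hgrr hnd ?_ fun a ha => ?_
  · have hcard := (h i₀).card_roots
    have hf₀ : (f i₀).roots.card = (f i₀).natDegree := (h i₀).1.2
    have hg₀ : g.roots.card = g.natDegree := hgrr.2
    omega
  · obtain ⟨i, hi⟩ := hg a ha
    have hcount := Multiset.count_eq_one_of_mem hnd ha
    rw [eval_finsetSum, Finset.mul_sum]
    refine Finset.sum_pos' (fun j _ => ?_)
      ⟨i, Finset.mem_univ _, (h i).neg_one_pow_rootCount_mul_eval_pos (hlc i) hcount hi⟩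
    by_cases hj : (f j).IsRoot a
    · rw [hj.eq_zero, mul_zero]
    · exact ((h j).neg_one_pow_rootCount_mul_eval_pos (hlc j) hcount hj).le

theorem precedes_sum_left {ι : Type*} [Fintype ι] [Nonempty ι] {f : ι → ℝ[X]} {g : ℝ[X]}
    (hlc : ∀ i, 0 < (f i).leadingCoeff) (h : ∀ i, Precedes (f i) g) :
    Precedes (∑ i, f i) g := by
  induction hm : g.natDegree using Nat.strong_induction_on generalizing g f with
  | _ m ih =>
  by_cases hcommon : ∃ a ∈ g.roots, ∀ i, (f i).IsRoot a
  · obtain ⟨a, ha, hfa⟩ := hcommon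
    obtain ⟨g₁, rfl⟩ := dvd_iff_isRoot.2 (isRoot_of_mem_roots ha)
    choose f₁ hf₁ using fun i => dvd_iff_isRoot.2 (hfa i)
    obtain rfl : f = fun i => (X - C a) * f₁ i := funext hf₁
    have hg₁ : g₁ ≠ 0 := right_ne_zero_of_mul (h (Classical.arbitrary ι)).2.1.1
    simp only [precedes_X_sub_C_mul_iff] at h
    rw [← Finset.mul_sum, precedes_X_sub_C_mul_iff]
    refine ih g₁.natDegree ?_ (fun i => ?_) h rfl
    · rw [← hm, natDegree_mul (X_sub_C_ne_zero a) hg₁, natDegree_X_sub_C]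
      omega
    · simpa [leadingCoeff_mul] using hlc i
  · push Not at hcommon
    exact precedes_sum_of_forall_exists_not_isRoot hlc h hcommon

theorem precedes_sum_right {ι : Type*} [Fintype ι] [Nonempty ι] {f : ι → ℝ[X]} {g : ℝ[X]}
    (hlc : ∀ i, 0 < (f i).leadingCoeff) (h : ∀ i, Precedes g (f i)) :
    Precedes g (∑ i, f i) := by
  obtain ⟨t, hgt, hft⟩ := ((eventually_atTop_forall_roots_le g).and
    (eventually_all.2 fun i => eventually_atTop_forall_roots_le (f i))).exists
  exact precedes_of_precedes_X_sub_C_mul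
    (precedes_sum_left hlc fun i => precedes_X_sub_C_mul_of_precedes (h i) hgt (hft i)) hgt

theorem stmt0_general (n : ℕ) (hn : 1 ≤ n) (g : Polynomial ℝ) (f : Fin n → Polynomial ℝ)
    (hfstd : ∀ i, 0 < (f i).leadingCoeff) :
    ((∀ i, AlternatesLeft g (f i) ∨ Interlaces g (f i)) →
      RealRooted (∑ i, f i) ∧
        (Interlaces g (∑ i, f i) ∨ AlternatesLeft g (∑ i, f i))) ∧
    ((∀ i, AlternatesLeft (f i) g ∨ Interlaces (f i) g) →
      RealRooted (∑ i, f i) ∧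
        (Interlaces (∑ i, f i) g ∨ AlternatesLeft (∑ i, f i) g)) := by
  have : Nonempty (Fin n) := ⟨⟨0, hn⟩⟩
  refine ⟨fun h => ?_, fun h => ?_⟩
  · have hF := precedes_sum_right hfstd fun i => precedes_iff.2 (h i).symm
    exact ⟨hF.2.1, precedes_iff.1 hF⟩
  · have hF := precedes_sum_left hfstd fun i => precedes_iff.2 (h i).symm
    exact ⟨hF.1, precedes_iff.1 hF⟩

/-- Lemma (positive sums preserve interlacing).
Let `g` and `f 1, …, f n` be real-rooted standard polynomials.
(i) If for each `i` either `g ≪ f i` or `g ⪯ f i`, then `F = Σ f i` is real-rooted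
with `g ⪯ F` or `g ≪ F`.
(ii) If for each `i` either `f i ≪ g` or `f i ⪯ g`, then `F = Σ f i` is real-rooted
with `F ⪯ g` or `F ≪ g`. -/
theorem stmt0 (n : ℕ) (hn : 1 ≤ n) (g : Polynomial ℝ) (f : Fin n → Polynomial ℝ)
    (hg : RealRooted g) (hgstd : 0 < g.leadingCoeff)
    (hf : ∀ i, RealRooted (f i)) (hfstd : ∀ i, 0 < (f i).leadingCoeff) :
    ((∀ i, AlternatesLeft g (f i) ∨ Interlaces g (f i)) →
      RealRooted (∑ i, f i) ∧
        (Interlaces g (∑ i, f i) ∨ AlternatesLeft g (∑ i, f i))) ∧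
    ((∀ i, AlternatesLeft (f i) g ∨ Interlaces (f i) g) →
      RealRooted (∑ i, f i) ∧
        (Interlaces (∑ i, f i) g ∨ AlternatesLeft (∑ i, f i) g)) :=
  stmt0_general n hn g f hfstd
end

section
/- Let f, g ∈ ℝ[x], where f has only real zeros and g is nonzero with all its zeros in the interval [−1,0]. Then the diamond product (f ⋄ g)(x) := Σ_{k≥0} (f^{(k)}(x)/k!) (g^{(k)}(x)/k!) x^k (x+1)^k has only real zeros (or is identically zero). -/
open Polynomial

/-- The diamond product `(f ⋄ g)(x) = Σ_k (f^{(k)}(x)/k!) (g^{(k)}(x)/k!) x^k (x+1)^k`. -/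
noncomputable def diamondProd (f g : Polynomial ℝ) : Polynomial ℝ :=
  ∑ k ∈ Finset.range (f.natDegree + g.natDegree + 1),
    C ((k.factorial : ℝ))⁻¹ * (derivative^[k] f) * C ((k.factorial : ℝ))⁻¹ *
      (derivative^[k] g) * (X ^ k * (X + 1) ^ k)

/-!
Fix `x` with `0 < Im x`, put `w = x (x + 1)`, `F(z) = f(x + z)`, `G(z) = g(x + z)` and
`n = deg g`. Then `(f ⋄ g)(x) = ∑ Fₖ Gₖ wᵏ` is the coefficient of `zⁿ` in `F(z) · zⁿ G(w / z)`.
The zeros of `F` lie on the line `Im z = -Im x`; those of `zⁿ G(w / z)` are the points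
`w / (s - x)` with `s ∈ [-1, 0]` a zero of `g`, and these satisfy `Im z ≤ -Im x`. By Gauss–Lucas
the `n`-th derivative of the product has its zeros in the same half-plane, so it does not vanish
at `0`, which makes the coefficient nonzero. Conjugation excludes zeros in the lower half-plane.
-/

open Finset Complex ComplexConjugate

namespace Polynomial

theorem natDegree_iterate_derivative_eq {R : Type*} [Semiring R] [IsAddTorsionFree R]
    (p : R[X]) (n : ℕ) : (derivative^[n] p).natDegree = p.natDegree - n := by
  induction n with
  | zero => rfl
  | succ n ih => rw [Function.iterate_succ_apply', natDegree_derivative, ih, Nat.sub_sub]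

theorem iterate_derivative_ne_zero {R : Type*} [Semiring R] [IsAddTorsionFree R] {p : R[X]}
    (hp : p ≠ 0) {n : ℕ} (hn : n ≤ p.natDegree) : derivative^[n] p ≠ 0 := by
  induction n with
  | zero => exact hp
  | succ n ih =>
    rw [Function.iterate_succ_apply', derivative_ne_zero, natDegree_iterate_derivative_eq]
    omega

theorem eval_iterate_derivative_eq_factorial_mul_taylor_coeff {R : Type*} [CommSemiring R]
    (p : R[X]) (r : R) (k : ℕ) :
    eval r (derivative^[k] p) = k.factorial * (taylor r p).coeff k := by
  rw [taylor_coeff, ← congrFun (factorial_smul_hasseDeriv k) p, LinearMap.smul_apply, eval_smul,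
    nsmul_eq_mul]

theorem coeff_mul_reflect {R : Type*} [Semiring R] (p q : R[X]) (n : ℕ) :
    (p * reflect n q).coeff n = ∑ k ∈ range (n + 1), p.coeff k * q.coeff k := by
  rw [coeff_mul, Nat.sum_antidiagonal_eq_sum_range_succ_mk]
  refine sum_congr rfl fun k hk => ?_
  rw [coeff_reflect, revAt_le (Nat.sub_le n k), Nat.sub_sub_self (mem_range_succ_iff.mp hk)]

theorem isRoot_inv_of_isRoot_reflect {K : Type*} [Field K] {p : K[X]} {N : ℕ}
    (hp : p.natDegree ≤ N) {z : K} (hz : z ≠ 0) (h : (reflect N p).IsRoot z) : p.IsRoot z⁻¹ := by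
  let := invertibleOfNonzero (inv_ne_zero hz)
  have := (eval₂_reflect_eq_zero_iff (RingHom.id K) z⁻¹ N p hp).mp
  rw [invOf_eq_inv, inv_inv] at this
  exact this h

section GaussLucas

variable {p : ℂ[X]} {c : ℝ}

theorem rootSet_derivative_subset_halfSpace_im_le (hp : 0 < p.degree)
    (h : p.rootSet ℂ ⊆ {z | z.im ≤ c}) : (derivative p).rootSet ℂ ⊆ {z | z.im ≤ c} :=
  (rootSet_derivative_subset_convexHull_rootSet hp).trans
    (convexHull_min h (convex_halfSpace_im_le c))

theorem rootSet_iterate_derivative_subset_halfSpace_im_le (h : p.rootSet ℂ ⊆ {z | z.im ≤ c})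
    {n : ℕ} (hn : n ≤ p.natDegree) : (derivative^[n] p).rootSet ℂ ⊆ {z | z.im ≤ c} := by
  induction n with
  | zero => exact h
  | succ n ih =>
    rw [Function.iterate_succ_apply']
    refine rootSet_derivative_subset_halfSpace_im_le ?_ (ih (by omega))
    rw [← natDegree_pos_iff_degree_pos, natDegree_iterate_derivative_eq]
    omega

theorem coeff_ne_zero_of_rootSet_subset_halfSpace_im_le (hp : p ≠ 0)
    (h : p.rootSet ℂ ⊆ {z | z.im ≤ c}) (hc : c < 0) {n : ℕ} (hn : n ≤ p.natDegree) :
    p.coeff n ≠ 0 := by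
  intro hcoeff
  have hroot : (0 : ℂ) ∈ (derivative^[n] p).rootSet ℂ := by
    rw [mem_rootSet, coe_aeval_eq_eval, ← coeff_zero_eq_eval_zero, coeff_iterate_derivative,
      zero_add, hcoeff, smul_zero]
    exact ⟨iterate_derivative_ne_zero hp hn, rfl⟩
  have := rootSet_iterate_derivative_subset_halfSpace_im_le h hn hroot
  exact hc.not_ge (by simpa using this)

end GaussLucas

end Polynomial

namespace Complex

theorem im_mul_add_one_div_sub_le {x : ℂ} (hx : 0 < x.im) {s : ℝ} (hs : s ∈ Set.Icc (-1 : ℝ) 0) :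
    (x * (x + 1) / (s - x)).im ≤ -x.im := by
  have hsx : (s : ℂ) - x ≠ 0 := fun h => by simpa [hx.ne'] using congrArg im h
  have hsplit : x * (x + 1) / (s - x) = -(x + (s + 1 : ℝ)) + (s * (s + 1) : ℝ) * (s - x)⁻¹ := by
    field_simp
    push_cast
    ring
  have hss : s * (s + 1) ≤ 0 := mul_nonpos_of_nonpos_of_nonneg hs.2 (by linarith [hs.1])
  have hinv : 0 ≤ ((s : ℂ) - x)⁻¹.im := by
    rw [inv_im]
    exact div_nonneg (by simp [hx.le]) (normSq_nonneg _)
  rw [hsplit, add_im, neg_im, add_im, ofReal_im, im_ofReal_mul]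
  nlinarith

end Complex

namespace AllRootsReal

theorem exists_ofReal_eq_of_isRoot {f : ℝ[X]} (hf : AllRootsReal f) (hf0 : f ≠ 0) {z : ℂ}
    (hz : (f.map (algebraMap ℝ ℂ)).IsRoot z) : ∃ r ∈ f.roots, (r : ℂ) = z := by
  rw [← mem_roots (map_ne_zero hf0), (splits_iff_card_roots.mpr hf).roots_map] at hz
  exact Multiset.mem_map.mp hz

theorem of_forall_aeval_eq_zero {f : ℝ[X]} (h : ∀ z : ℂ, aeval z f = 0 → z.im = 0) :
    AllRootsReal f := by
  refine splits_iff_card_roots.mp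
    (Splits.of_splits_map (algebraMap ℝ ℂ) (IsAlgClosed.splits _) fun z hz => ⟨z.re, ?_⟩)
  have hz' : z.im = 0 := h z (by rw [aeval_def, eval₂_eq_eval_map]; exact isRoot_of_mem_roots hz)
  exact Complex.ext (by simp) (by simp [hz'])

end AllRootsReal

theorem aeval_diamondProd (f g : ℝ[X]) (z : ℂ) :
    aeval z (diamondProd f g) = ∑ k ∈ range (f.natDegree + g.natDegree + 1),
      (taylor z (f.map (algebraMap ℝ ℂ))).coeff k * (taylor z (g.map (algebraMap ℝ ℂ))).coeff k *
        (z * (z + 1)) ^ k := by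
  have haeval (p : ℝ[X]) (k : ℕ) : aeval z (derivative^[k] p) =
      k.factorial * (taylor z (p.map (algebraMap ℝ ℂ))).coeff k := by
    rw [aeval_def, eval₂_eq_eval_map, ← iterate_derivative_map,
      eval_iterate_derivative_eq_factorial_mul_taylor_coeff]
  rw [diamondProd, map_sum]
  refine sum_congr rfl fun k _ => ?_
  simp only [map_mul, aeval_C, map_pow, map_add, aeval_X, map_one, haeval, map_inv₀, map_natCast]
  have : (k.factorial : ℂ) ≠ 0 := by exact_mod_cast k.factorial_ne_zero
  field_simp
  rw [mul_pow]
  ring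

section UpperHalfPlane

variable {x : ℂ}

theorem im_eq_neg_of_isRoot_taylor {F : ℂ[X]} (hF : ∀ z, F.IsRoot z → z.im = 0) {z : ℂ}
    (hz : (taylor x F).IsRoot z) : z.im = -x.im := by
  have := hF (z + x) (by rwa [IsRoot, ← taylor_eval])
  rw [add_im] at this
  linarith

theorem im_le_of_isRoot_reflect_taylor_comp {G : ℂ[X]} (hG : G ≠ 0)
    (hGroots : ∀ z, G.IsRoot z → ∃ s ∈ Set.Icc (-1 : ℝ) 0, z = s) (hx : 0 < x.im) {z : ℂ}
    (hz : (reflect G.natDegree ((taylor x G).comp (C (x * (x + 1)) * X))).IsRoot z) :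
    z.im ≤ -x.im := by
  set w := x * (x + 1)
  have hw : w ≠ 0 := mul_ne_zero (fun h => by simp [h] at hx)
    (fun h => by simpa [hx.ne'] using congrArg im h)
  have hdeg : ((taylor x G).comp (C w * X)).natDegree ≤ G.natDegree := by
    rw [natDegree_comp, natDegree_C_mul_X w hw, mul_one, natDegree_taylor]
  have hz0 : z ≠ 0 := by
    rintro rfl
    rw [IsRoot, ← coeff_zero_eq_eval_zero, coeff_reflect, revAt_le (Nat.zero_le _),
      Nat.sub_zero, comp_C_mul_X_coeff, ← natDegree_taylor G x, coeff_natDegree] at hz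
    exact mul_ne_zero (by simpa [leadingCoeff_taylor] using hG) (pow_ne_zero _ hw) hz
  have hroot := isRoot_inv_of_isRoot_reflect hdeg hz0 hz
  simp only [IsRoot, eval_comp, eval_mul, eval_C, eval_X, taylor_eval] at hroot
  obtain ⟨s, hs, hws⟩ := hGroots _ hroot
  have hzw : z = w / (s - x) := by
    rw [← hws, add_sub_cancel_right, div_mul_cancel_left₀ hw, inv_inv]
  exact hzw ▸ im_mul_add_one_div_sub_le hx hs

theorem sum_taylor_coeff_mul_ne_zero {F G : ℂ[X]} (hF0 : F ≠ 0)
    (hF : ∀ z, F.IsRoot z → z.im = 0) (hG : G ≠ 0)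
    (hGroots : ∀ z, G.IsRoot z → ∃ s ∈ Set.Icc (-1 : ℝ) 0, z = s) (hx : 0 < x.im) {N : ℕ}
    (hN : G.natDegree < N) :
    ∑ k ∈ range N, (taylor x F).coeff k * (taylor x G).coeff k * (x * (x + 1)) ^ k ≠ 0 := by
  set n := G.natDegree
  set H := (taylor x G).comp (C (x * (x + 1)) * X)
  have hsum : ∑ k ∈ range N, (taylor x F).coeff k * (taylor x G).coeff k * (x * (x + 1)) ^ k =
      (taylor x F * reflect n H).coeff n := by
    rw [coeff_mul_reflect]
    refine (sum_subset (range_subset_range.mpr hN) fun k _ hk => ?_).symm.trans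
      (sum_congr rfl fun k _ => by rw [comp_C_mul_X_coeff, mul_assoc])
    have hk' : (taylor x G).natDegree < k := by rw [natDegree_taylor]; simpa using hk
    rw [coeff_eq_zero_of_natDegree_lt hk', mul_zero, zero_mul]
  have hGx : eval x G ≠ 0 := fun h => by
    obtain ⟨s, -, hs⟩ := hGroots x h
    simpa [hx.ne'] using congrArg im hs
  have hHn : (reflect n H).coeff n = eval x G := by
    rw [coeff_reflect, revAt_le le_rfl, Nat.sub_self, comp_C_mul_X_coeff, pow_zero, mul_one,
      taylor_coeff_zero]
  have hH0 : reflect n H ≠ 0 := fun h => hGx (by rw [← hHn, h, coeff_zero])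
  have hF0' : taylor x F ≠ 0 := by simpa using hF0
  have hP0 : taylor x F * reflect n H ≠ 0 := mul_ne_zero hF0' hH0
  rw [hsum]
  refine coeff_ne_zero_of_rootSet_subset_halfSpace_im_le hP0 (c := -x.im) ?_ (by linarith) ?_
  · intro z hz
    rw [mem_rootSet, coe_aeval_eq_eval, eval_mul, mul_eq_zero] at hz
    rcases hz.2 with hzF | hzH
    · exact (im_eq_neg_of_isRoot_taylor hF hzF).le
    · exact im_le_of_isRoot_reflect_taylor_comp hG hGroots hx hzH
  · rw [natDegree_mul hF0' hH0]
    exact le_add_left (le_natDegree_of_ne_zero (hHn ▸ hGx))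

end UpperHalfPlane

/-- Theorem: if `f` has only real zeros and `g` is nonzero with all its zeros in
`[-1,0]`, then `f ⋄ g` has only real zeros (or is identically zero). -/
theorem stmt6 (f g : Polynomial ℝ) (hf : AllRootsReal f)
    (hg : g ≠ 0) (hgreal : AllRootsReal g)
    (hgroots : ∀ x ∈ g.roots, x ∈ Set.Icc (-1 : ℝ) 0) :
    AllRootsReal (diamondProd f g) := by
  rcases eq_or_ne f 0 with rfl | hf0
  · simp [diamondProd, AllRootsReal]
  have hupper (z : ℂ) (hz : 0 < z.im) : aeval z (diamondProd f g) ≠ 0 := by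
    rw [aeval_diamondProd]
    refine sum_taylor_coeff_mul_ne_zero (by simpa using hf0) (fun y hy => ?_) (by simpa using hg)
      (fun y hy => ?_) hz (by simp)
    · obtain ⟨r, -, rfl⟩ := hf.exists_ofReal_eq_of_isRoot hf0 hy
      exact ofReal_im r
    · obtain ⟨s, hs, rfl⟩ := hgreal.exists_ofReal_eq_of_isRoot hg hy
      exact ⟨s, hgroots s hs, rfl⟩
  refine AllRootsReal.of_forall_aeval_eq_zero fun z hz => ?_
  rcases lt_trichotomy z.im 0 with hlt | heq | hgt
  · exact absurd (by rw [aeval_conj, hz, map_zero]) (hupper (conj z) (by simpa using hlt))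
  · exact heq
  · exact absurd hz (hupper z hgt)
end

section
/- Let n > 1 be an integer and q ∈ ℝ. The sequence Γ_q = {q+k}_{k≥0} is a multiplier n-sequence if and only if q ∉ (−n, 0). -/
/-!
The transform of `Γ_q` is the operator `f ↦ q f + x f'`. For `q > 0` it preserves real-rootedness
by Rolle's theorem: away from `0`, `q f + x f'` is a nonvanishing multiple of the derivative of
`|x|^q f(x)`, which vanishes at `0` and at every zero of `f`; so between consecutive zeros of `x f`
lies a zero of `q f + x f'`, and multiplicities drop by at most one. For `q ≤ -deg f`, reversing the
coefficients turns the operator with parameter `q` into the one with parameter `-q - deg f ≥ 0`.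
Conversely, for `q ∈ (-n, 0)` pick `m` with `-q ∈ (m, m + 2)` and `m + 2 ≤ n`: the real-rooted
`x^m (x² - 1)` is sent to `x^m ((q + m + 2) x² - (q + m))`, whose quadratic factor has no real zero.
-/

open Polynomial

/-- The transform `Σ aᵢ xⁱ ↦ Σ γᵢ aᵢ xⁱ`. -/
noncomputable def seqTransform (γ : ℕ → ℝ) (f : Polynomial ℝ) : Polynomial ℝ :=
  ∑ i ∈ Finset.range (f.natDegree + 1), C (γ i * f.coeff i) * X ^ i

/-- `γ` is a multiplier sequence: it maps every real-rooted polynomial to a polynomial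
with only real zeros (or the zero polynomial). -/
def MultiplierSeq (γ : ℕ → ℝ) : Prop :=
  ∀ f : Polynomial ℝ, f ≠ 0 → AllRootsReal f → AllRootsReal (seqTransform γ f)

/-- `γ` is a multiplier `n`-sequence: it maps every real-rooted polynomial of degree at
most `n` to a polynomial with only real zeros (or the zero polynomial). -/
def MultiplierNSeq (n : ℕ) (γ : ℕ → ℝ) : Prop :=
  ∀ f : Polynomial ℝ, f ≠ 0 → f.natDegree ≤ n → AllRootsReal f →
    AllRootsReal (seqTransform γ f)

namespace Polynomial

section EulerOp

variable {R : Type*} [CommRing R]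

noncomputable def eulerOp (q : R) (f : R[X]) : R[X] := C q * f + X * derivative f

theorem coeff_eulerOp (q : R) (f : R[X]) (i : ℕ) :
    (eulerOp q f).coeff i = (q + i) * f.coeff i := by
  rcases i with _ | i
  · simp [eulerOp, mul_coeff_zero]
  · rw [eulerOp, coeff_add, coeff_C_mul, coeff_X_mul, coeff_derivative]
    push_cast
    ring

theorem eval_eulerOp (q : R) (f : R[X]) (x : R) :
    (eulerOp q f).eval x = q * f.eval x + x * (derivative f).eval x := by
  simp [eulerOp]

theorem natDegree_eulerOp_le (q : R) (f : R[X]) : (eulerOp q f).natDegree ≤ f.natDegree :=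
  natDegree_le_iff_coeff_eq_zero.mpr fun i hi => by
    rw [coeff_eulerOp, coeff_eq_zero_of_natDegree_lt hi, mul_zero]

theorem eulerOp_X_pow_mul (q : R) (m : ℕ) (f : R[X]) :
    eulerOp q (X ^ m * f) = X ^ m * eulerOp (q + m) f := by
  ext i
  rw [coeff_eulerOp, coeff_X_pow_mul', coeff_X_pow_mul']
  split_ifs with h
  · rw [coeff_eulerOp, Nat.cast_sub h]
    ring
  · rw [mul_zero]

theorem reflect_eulerOp {f : R[X]} {d : ℕ} (hd : f.natDegree ≤ d) (q : R) :
    reflect d (eulerOp q f) = -eulerOp (-q - d) (reflect d f) := by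
  ext i
  rw [coeff_reflect, coeff_eulerOp, coeff_neg, coeff_eulerOp, coeff_reflect]
  rcases le_or_gt i d with hi | hi
  · rw [revAt_le hi, Nat.cast_sub hi]
    ring
  · rw [revAt_eq_self_of_lt hi, coeff_eq_zero_of_natDegree_lt (hd.trans_lt hi)]
    ring

theorem X_pow_dvd_eulerOp {q : R} {f : R[X]} {m : ℕ} (h : X ^ m ∣ f) : X ^ m ∣ eulerOp q f := by
  rw [X_pow_dvd_iff] at h ⊢
  intro i hi
  rw [coeff_eulerOp, h i hi, mul_zero]

variable [IsDomain R]

theorem rootMultiplicity_X_mul_le_eulerOp [CharZero R] {q : R} {f : R[X]} (hf : f ≠ 0)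
    (hg : eulerOp q f ≠ 0) (x : R) :
    (X * f).rootMultiplicity x ≤ (eulerOp q f).rootMultiplicity x + 1 := by
  classical
  have hX : (X : R[X]) = X - C 0 := by simp
  rw [rootMultiplicity_mul (mul_ne_zero X_ne_zero hf), hX, rootMultiplicity_X_sub_C]
  split_ifs with hx
  · subst hx
    have h : (X - C 0) ^ f.rootMultiplicity 0 ∣ eulerOp q f := by
      rw [← hX]
      exact X_pow_dvd_eulerOp (by simpa using pow_rootMultiplicity_dvd f 0)
    have := (le_rootMultiplicity_iff hg).mpr h
    omega
  · have hdvd : (X - C x) ^ (f.rootMultiplicity x - 1) ∣ eulerOp q f :=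
      dvd_add ((pow_dvd_pow _ (Nat.sub_le _ 1)).trans (pow_rootMultiplicity_dvd f x) |>.mul_left _)
        ((pow_dvd_pow _ (rootMultiplicity_sub_one_le_derivative_rootMultiplicity f x)).trans
          (pow_rootMultiplicity_dvd _ x) |>.mul_left _)
    have := (le_rootMultiplicity_iff hg).mpr hdvd
    omega

end EulerOp

section Splits

variable {K : Type*} [Field K]

theorem Splits.reverse {f : K[X]} (hf : f.Splits) : f.reverse.Splits := by
  induction hf using Submonoid.closure_induction with
  | mem g hg =>
    rcases hg with ⟨a, rfl⟩ | ⟨a, rfl⟩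
    · simp
    · exact Splits.of_natDegree_le_one ((reverse_natDegree_le _).trans (natDegree_X_add_C a).le)
  | one =>
    rw [← C_1, reverse_C]
    exact Splits.C 1
  | mul f g _ _ hf hg => simpa [reverse_mul_of_domain] using hf.mul hg

theorem Splits.reflect {f : K[X]} (hf : f.Splits) {N : ℕ} (hN : f.natDegree ≤ N) :
    (reflect N f).Splits := by
  have h := reflect_mul f 1 le_rfl (natDegree_one.trans_le (Nat.zero_le (N - f.natDegree)))
  rw [mul_one, reflect_one, Nat.add_sub_cancel' hN] at h
  rw [h]
  exact hf.reverse.mul (Splits.X_pow _)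

end Splits

theorem card_roots_le_card_roots_add_one_of_interleaved {R : Type*} [CommRing R] [IsDomain R]
    [LinearOrder R] {p g : R[X]} (hp : p ≠ 0) (hg : g ≠ 0)
    (hmult : ∀ x, p.rootMultiplicity x ≤ g.rootMultiplicity x + 1)
    (hinter : ∀ x y, p.IsRoot x → p.IsRoot y → x < y → (∀ z ∈ Set.Ioo x y, ¬ p.IsRoot z) →
      ∃ z ∈ Set.Ioo x y, g.IsRoot z) :
    Multiset.card p.roots ≤ Multiset.card g.roots + 1 := by
  classical
  set P := p.roots.toFinset
  set G := g.roots.toFinset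
  have hPG : P.card ≤ (G \ P).card + 1 := by
    refine Finset.card_le_sdiff_of_interleaved fun x hx y hy hxy hgap => ?_
    rw [Multiset.mem_toFinset, mem_roots hp] at hx hy
    obtain ⟨z, hz, hgz⟩ := hinter x y hx hy hxy fun z hz hpz =>
      hgap z (by rwa [Multiset.mem_toFinset, mem_roots hp]) hz
    exact ⟨z, by rwa [Multiset.mem_toFinset, mem_roots hg], hz⟩
  calc Multiset.card p.roots = ∑ x ∈ P, p.roots.count x := (Multiset.toFinset_sum_count_eq _).symm
    _ = ∑ x ∈ P, (p.roots.count x - 1 + 1) :=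
      Finset.sum_congr rfl fun x hx => (Nat.sub_add_cancel
        (Multiset.one_le_count_iff_mem.mpr (Multiset.mem_toFinset.mp hx))).symm
    _ = ∑ x ∈ P, (p.rootMultiplicity x - 1) + P.card := by
      simp only [Finset.sum_add_distrib, Finset.card_eq_sum_ones, count_roots]
    _ ≤ ∑ x ∈ P, g.roots.count x + ((G \ P).card + 1) := by
      gcongr with x
      rw [count_roots]
      have := hmult x
      omega
    _ ≤ ∑ x ∈ P, g.roots.count x + (∑ x ∈ G \ P, g.roots.count x + 1) := by
      rw [Finset.card_eq_sum_ones]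
      gcongr with x hx
      exact Multiset.one_le_count_iff_mem.mpr (Multiset.mem_toFinset.mp (Finset.mem_sdiff.mp hx).1)
    _ = Multiset.card g.roots + 1 := by
      rw [← add_assoc, ← Finset.sum_union Finset.disjoint_sdiff, Finset.union_sdiff_self_eq_union,
        ← Multiset.toFinset_sum_count_eq, ← Finset.sum_subset Finset.subset_union_right]
      intro x _ hx
      simpa only [G, Multiset.mem_toFinset, Multiset.count_eq_zero] using hx

theorem hasDerivAt_abs_rpow_mul_eval (q : ℝ) (f : ℝ[X]) {x : ℝ} (hx : x ≠ 0) :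
    HasDerivAt (fun t => |t| ^ q * f.eval t)
      (|x| ^ (q - 1) * SignType.sign x * (eulerOp q f).eval x) x := by
  have h := ((Real.hasDerivAt_rpow_const (p := q) (Or.inl (abs_ne_zero.mpr hx))).comp x
    (hasDerivAt_abs hx)).mul (f.hasDerivAt x)
  have hne : |x| ≠ 0 := abs_ne_zero.mpr hx
  have hsign : (SignType.sign x : ℝ) * SignType.sign x = 1 := by
    rcases hx.lt_or_gt with h | h <;> simp [h]
  have habs : |x| = SignType.sign x * x := by
    rw [← one_mul |x|, ← hsign, mul_assoc, sign_mul_abs]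
  refine h.congr_deriv ?_
  rw [eval_eulerOp, Function.comp_apply, ← div_mul_cancel₀ (|x| ^ q) hne, ← Real.rpow_sub_one hne,
    habs]
  ring

theorem exists_isRoot_eulerOp_mem_Ioo {q : ℝ} (hq : 0 < q) {f : ℝ[X]} {x y : ℝ} (hxy : x < y)
    (hx : (X * f).IsRoot x) (hy : (X * f).IsRoot y) (h0 : (0 : ℝ) ∉ Set.Ioo x y) :
    ∃ z ∈ Set.Ioo x y, (eulerOp q f).IsRoot z := by
  have hvanish : ∀ t, (X * f).IsRoot t → |t| ^ q * f.eval t = 0 := by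
    intro t ht
    rcases (by simpa using ht : t = 0 ∨ f.eval t = 0) with rfl | hft
    · simp [Real.zero_rpow hq.ne']
    · rw [hft, mul_zero]
  have hcont : Continuous fun t : ℝ => |t| ^ q * f.eval t :=
    ((Real.continuous_rpow_const hq.le).comp continuous_abs).mul f.continuous
  obtain ⟨z, hz, hderiv⟩ := exists_hasDerivAt_eq_zero hxy hcont.continuousOn
    ((hvanish x hx).trans (hvanish y hy).symm)
    fun t ht => hasDerivAt_abs_rpow_mul_eval q f (fun h => h0 (h ▸ ht))
  have hz0 : z ≠ 0 := fun h => h0 (h ▸ hz)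
  have hsign : (SignType.sign z : ℝ) ≠ 0 := by
    rcases hz0.lt_or_gt with h | h <;> simp [h]
  refine ⟨z, hz, ?_⟩
  simpa [hsign, (Real.rpow_pos_of_pos (abs_pos.mpr hz0) _).ne'] using hderiv

theorem splits_derivative {f : ℝ[X]} (hf : f.Splits) : (derivative f).Splits := by
  rw [splits_iff_card_roots] at hf ⊢
  have := card_roots_le_derivative f
  have := natDegree_derivative_le f
  have := card_roots' (derivative f)
  omega

theorem splits_eulerOp_of_pos {q : ℝ} (hq : 0 < q) {f : ℝ[X]} (hf : f.Splits) :
    (eulerOp q f).Splits := by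
  rcases eq_or_ne f 0 with rfl | hf0
  · simp [eulerOp]
  have hlead : (eulerOp q f).coeff f.natDegree ≠ 0 := by
    rw [coeff_eulerOp]
    exact mul_ne_zero (by positivity) (leadingCoeff_ne_zero.mpr hf0)
  have hg0 : eulerOp q f ≠ 0 := fun h => hlead (by rw [h, coeff_zero])
  have hdeg : (eulerOp q f).natDegree = f.natDegree :=
    (natDegree_eulerOp_le q f).antisymm (le_natDegree_of_ne_zero hlead)
  have hcount := card_roots_le_card_roots_add_one_of_interleaved (mul_ne_zero X_ne_zero hf0) hg0
    (rootMultiplicity_X_mul_le_eulerOp hf0 hg0) fun x y hx hy hxy hgap =>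
      exists_isRoot_eulerOp_mem_Ioo hq hxy hx hy fun h => hgap 0 h (by simp)
  rw [roots_mul (mul_ne_zero X_ne_zero hf0), roots_X, Multiset.card_add, Multiset.card_singleton,
    splits_iff_card_roots.mp hf] at hcount
  have := card_roots' (eulerOp q f)
  rw [splits_iff_card_roots]
  omega

theorem splits_eulerOp_of_nonneg {q : ℝ} (hq : 0 ≤ q) {f : ℝ[X]} (hf : f.Splits) :
    (eulerOp q f).Splits := by
  rcases hq.eq_or_lt with rfl | hq
  · simpa [eulerOp] using splits_derivative hf
  · exact splits_eulerOp_of_pos hq hf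

theorem splits_eulerOp {f : ℝ[X]} (hf : f.Splits) {q : ℝ}
    (hq : q ∉ Set.Ioo (-(f.natDegree : ℝ)) 0) : (eulerOp q f).Splits := by
  rcases le_or_gt 0 q with hq0 | hq0
  · exact splits_eulerOp_of_nonneg hq0 hf
  have hrefl : (reflect f.natDegree (eulerOp q f)).Splits := by
    rw [reflect_eulerOp le_rfl]
    refine (splits_eulerOp_of_nonneg ?_ (hf.reflect le_rfl)).neg
    linarith [not_lt.mp fun h => hq ⟨h, hq0⟩]
  simpa using hrefl.reflect (natDegree_reflect_le.trans (max_le le_rfl (natDegree_eulerOp_le q f)))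

theorem not_splits_eulerOp_X_pow_mul_X_sq_sub_C_one {q : ℝ} {m : ℕ} (hneg : q + m < 0)
    (hpos : 0 < q + m + 2) : ¬ (eulerOp q (X ^ m * (X ^ 2 - C 1))).Splits := by
  have hquad : eulerOp (q + m) (X ^ 2 - C 1) = C (q + m + 2) * X ^ 2 - C (q + m) := by
    simp only [eulerOp, derivative_sub, derivative_X_pow, derivative_one, map_add, map_one,
      Nat.cast_ofNat, C_ofNat]
    ring
  rw [eulerOp_X_pow_mul, hquad, splits_mul_iff_right (pow_ne_zero m X_ne_zero) (Splits.X_pow m)]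
  intro hsplit
  have hdeg : (C (q + m + 2) * X ^ 2 - C (q + m)).degree = 2 := by
    rw [degree_sub_C] <;> rw [degree_C_mul_X_pow 2 hpos.ne'] <;> norm_num
  obtain ⟨x, hx⟩ := hsplit.exists_eval_eq_zero (by rw [hdeg]; norm_num)
  simp only [eval_sub, eval_mul, eval_C, eval_pow, eval_X] at hx
  nlinarith [sq_nonneg x]

end Polynomial

theorem exists_nat_add_two_le_of_mem_Ioo {n : ℕ} (hn : 1 < n) {q : ℝ}
    (hq : q ∈ Set.Ioo (-(n : ℝ)) 0) :
    ∃ m : ℕ, m + 2 ≤ n ∧ q + m < 0 ∧ 0 < q + m + 2 := by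
  have hfloor : ⌊-q⌋₊ < n := (Nat.floor_lt (by linarith [hq.2])).mpr (by linarith [hq.1])
  have hle := Nat.floor_le (by linarith [hq.2] : 0 ≤ -q)
  have hlt := Nat.lt_floor_add_one (-q)
  rcases Nat.eq_zero_or_pos ⌊-q⌋₊ with h0 | hpos
  · refine ⟨0, by omega, ?_, ?_⟩ <;> simp only [h0, Nat.cast_zero] at hlt ⊢ <;> linarith [hq.2]
  · refine ⟨⌊-q⌋₊ - 1, by omega, ?_, ?_⟩ <;> rw [Nat.cast_sub hpos, Nat.cast_one] <;> linarith

theorem allRootsReal_iff_splits {f : ℝ[X]} : AllRootsReal f ↔ f.Splits :=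
  splits_iff_card_roots.symm

theorem coeff_seqTransform (γ : ℕ → ℝ) (f : ℝ[X]) (i : ℕ) :
    (seqTransform γ f).coeff i = γ i * f.coeff i := by
  simp only [seqTransform, finsetSum_coeff, coeff_C_mul_X_pow, Finset.sum_ite_eq,
    Finset.mem_range]
  split_ifs with h
  · rfl
  · rw [coeff_eq_zero_of_natDegree_lt (by omega), mul_zero]

theorem seqTransform_add_natCast (q : ℝ) (f : ℝ[X]) :
    seqTransform (fun k => q + (k : ℝ)) f = eulerOp q f := by
  ext i
  rw [coeff_seqTransform, coeff_eulerOp]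

/-- Corollary: for an integer `n > 1`, the sequence `Γ_q = {q+k}_{k ≥ 0}` is a
multiplier `n`-sequence if and only if `q ∉ (-n, 0)`. -/
theorem stmt8 (n : ℕ) (hn : 1 < n) (q : ℝ) :
    MultiplierNSeq n (fun k => q + (k : ℝ)) ↔ q ∉ Set.Ioo (-(n : ℝ)) 0 := by
  constructor
  · intro hmult hq
    obtain ⟨m, hmn, hneg, hpos⟩ := exists_nat_add_two_le_of_mem_Ioo hn hq
    have hdeg : (X ^ m * (X ^ 2 - C 1) : ℝ[X]).natDegree = m + 2 := by
      rw [natDegree_mul (pow_ne_zero m X_ne_zero) (X_pow_sub_C_ne_zero two_pos 1), natDegree_X_pow,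
        natDegree_X_pow_sub_C]
    have hsplit : (X ^ m * (X ^ 2 - C 1) : ℝ[X]).Splits :=
      (Splits.X_pow m).mul (Splits.of_natDegree_eq_two (x := 1) natDegree_X_pow_sub_C (by simp))
    refine not_splits_eulerOp_X_pow_mul_X_sq_sub_C_one hneg hpos ?_
    rw [← seqTransform_add_natCast, ← allRootsReal_iff_splits]
    exact hmult _ (ne_zero_of_natDegree_gt (n := 0) (by omega)) (hdeg ▸ hmn)
      (allRootsReal_iff_splits.mpr hsplit)
  · intro hq f _ hdeg hf
    rw [seqTransform_add_natCast, allRootsReal_iff_splits]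
    refine splits_eulerOp (allRootsReal_iff_splits.mp hf) fun h => hq ⟨?_, h.2⟩
    have : (f.natDegree : ℝ) ≤ n := by exact_mod_cast hdeg
    linarith [h.1]
end

section
/- Let α ∈ [−1,0] and let f ∈ ℝ[x] be a polynomial such that 𝓔(f) is nonzero and has all its zeros in the interval [−1,0]. Then 𝓔((x−α)f) has all its zeros in [−1,0], and 𝓔(f) interlaces 𝓔((x−α)f). If in addition 𝓔(f) has only simple zeros, then so does 𝓔((x−α)f). -/
open Polynomial

/-- The binomial polynomial `C(x, i) = x(x-1)⋯(x-i+1)/i!`. -/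
noncomputable def binomPoly (i : ℕ) : Polynomial ℝ :=
  C ((i.factorial : ℝ))⁻¹ * ∏ j ∈ Finset.range i, (X - C (j : ℝ))

/-!
Write `g = 𝓔(f)`. Expanding `(x - α) C(x, i)` in the binomial basis gives
`𝓔((x - α) f) = x (x + 1) g' + (x - α) g =: h`, and `h = G' - (x + 1 + α) g` for
`G = x (x + 1) g`, whose zeros are those of `g` together with `-1` and `0`. So `h` vanishes to
order at least `m - 1` at a zero of `G` of multiplicity `m`. On `(-1, 0)` the derivative of
`(-x)^(-α) (1 + x)^(1 + α) g` is `-(-x)^(-α-1) (1 + x)^α h`, so Rolle's theorem puts a zero of `h`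
strictly between any two zeros of `G`; the only exceptions are the endpoints when `α ∈ {-1, 0}`
and `g` does not vanish there, and then `h` vanishes at that endpoint instead. Counting, every
initial and every final segment of `ℝ` contains at most one zero of `G` more than of `h`. As
`deg h = deg g + 1`, this forces `h` to have all its zeros real, in `[-1, 0]`, and interlacing
those of `g`. A simple zero `c` of `g` is at most a simple zero of `h`: `h(c) = c (c + 1) g'(c)`,
and `h'(c) = (3c + 1 - α) g'(c)` when `c ∈ {-1, 0}`.
-/

theorem degree_binomPoly (i : ℕ) : (binomPoly i).degree = i := by
  rw [binomPoly, degree_C_mul (by positivity), degree_prod]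
  simp only [degree_X_sub_C, Finset.sum_const, Finset.card_range, nsmul_one]

theorem span_range_binomPoly : Submodule.span ℝ (Set.range binomPoly) = ⊤ :=
  let S : Polynomial.Sequence ℝ := ⟨binomPoly, degree_binomPoly⟩
  S.span fun i => (leadingCoeff_ne_zero.mpr (S.ne_zero i)).isUnit

theorem X_sub_C_mul_binomPoly (α : ℝ) (i : ℕ) :
    (X - C α) * binomPoly i = ((i : ℝ) + 1) • binomPoly (i + 1) + ((i : ℝ) - α) • binomPoly i := by
  have hsucc : ((i : ℝ) + 1) • binomPoly (i + 1) = (X - C (i : ℝ)) * binomPoly i := by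
    rw [binomPoly, binomPoly, Finset.prod_range_succ, Nat.factorial_succ, smul_eq_C_mul]
    have : ((i : ℝ) + 1) * ((((i + 1) * i.factorial : ℕ) : ℝ))⁻¹ = ((i.factorial : ℝ))⁻¹ := by
      push_cast
      field_simp
    rw [← mul_assoc, ← C_mul, this]
    ring
  rw [hsucc, sub_smul, smul_eq_C_mul, smul_eq_C_mul]
  ring

noncomputable def mulOp (α : ℝ) (g : Polynomial ℝ) : Polynomial ℝ :=
  X * (X + 1) * derivative g + (X - C α) * g

theorem E_X_sub_C_mul (E : Polynomial ℝ →ₗ[ℝ] Polynomial ℝ)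
    (hE : ∀ i : ℕ, E (binomPoly i) = X ^ i) (α : ℝ) (f : Polynomial ℝ) :
    E ((X - C α) * f) = mulOp α (E f) := by
  have key : E ∘ₗ LinearMap.mulLeft ℝ (X - C α) =
      (LinearMap.mulLeft ℝ (X * (X + 1)) ∘ₗ derivative + LinearMap.mulLeft ℝ (X - C α)) ∘ₗ E := by
    refine LinearMap.ext_on_range span_range_binomPoly fun i => ?_
    simp only [LinearMap.comp_apply, LinearMap.add_apply, LinearMap.mulLeft_apply,
      X_sub_C_mul_binomPoly, map_add, map_smul, hE, derivative_X_pow]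
    cases i with
    | zero =>
      simp only [CharP.cast_eq_zero, zero_add, pow_one, one_smul, zero_sub, pow_zero, neg_smul,
        smul_eq_C_mul, mul_one, map_zero, zero_tsub, mul_zero]
      ring
    | succ j =>
      simp only [smul_eq_C_mul, Nat.add_sub_cancel, C_add, C_sub, C_1, map_natCast]
      push_cast
      ring
  exact congrArg (· f) key

namespace Multiset

theorem countP_mono_left {α : Type*} {s : Multiset α} {p q : α → Prop} [DecidablePred p]
    [DecidablePred q] (h : ∀ x, p x → q x) : s.countP p ≤ s.countP q := by
  simpa only [countP_eq_card_filter] using card_le_card (monotone_filter_right s h)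

variable {α : Type*} [LinearOrder α]

theorem countP_le_eq_countP_lt_add_count (s : Multiset α) (c : α) :
    s.countP (· ≤ c) = s.countP (· < c) + s.count c := by
  induction s using Multiset.induction_on with
  | empty => simp
  | cons a s ih =>
    simp only [countP_cons, count_cons, ih]
    split_ifs <;> grind

theorem exists_max_of_exists (s : Multiset α) (q : α → Prop) [DecidablePred q]
    (h : ∃ a ∈ s, q a) : ∃ m ∈ s, q m ∧ ∀ a ∈ s, q a → a ≤ m := by
  obtain ⟨a, ha, hqa⟩ := h
  obtain ⟨m, hm, hmax⟩ := (s.filter q).toFinset.exists_max_image id ⟨a, by simp [ha, hqa]⟩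
  simp only [mem_toFinset, mem_filter, id] at hm hmax
  exact ⟨m, hm.1, hm.2, fun b hb hqb => hmax b ⟨hb, hqb⟩⟩

def Separates (B A : Multiset α) : Prop :=
  ∀ u ∈ A, ∀ v ∈ A, u < v → (∃ x ∈ B, u < x ∧ x < v) ∨
    (A.count u ≤ B.count u ∧ ∀ a ∈ A, u ≤ a) ∨ (A.count v ≤ B.count v ∧ ∀ a ∈ A, a ≤ v)

theorem Separates.map_toDual {A B : Multiset α} (h : Separates B A) :
    Separates (B.map OrderDual.toDual) (A.map OrderDual.toDual) := by
  have hinj : Function.Injective (OrderDual.toDual : α → αᵒᵈ) := OrderDual.toDual.injective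
  intro u hu v hv huv
  obtain ⟨u, hu', rfl⟩ := mem_map.mp hu
  obtain ⟨v, hv', rfl⟩ := mem_map.mp hv
  simp only [count_map_eq_count' _ _ hinj, mem_map, forall_exists_index, and_imp,
    forall_apply_eq_imp_iff₂, exists_exists_and_eq_and, OrderDual.toDual_le_toDual,
    OrderDual.toDual_lt_toDual] at huv ⊢
  rcases h v hv' u hu' huv with ⟨x, hx, hvx, hxu⟩ | h | h
  exacts [Or.inl ⟨x, hx, hxu, hvx⟩, Or.inr (Or.inr h), Or.inr (Or.inl h)]

/-- Induction along the points of `A`: between `c` and its predecessor `b` in `A`, either `B` has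
a point, which pays for the multiplicity lost at `c`, or `b` or `c` is an extreme point of `A`
at which `B` loses no multiplicity. -/
theorem countP_le_le_countP_le_add_one {A B : Multiset α} (hcount : ∀ c, A.count c ≤ B.count c + 1)
    (hsep : Separates B A) {c : α} (hc : c ∈ A) :
    A.countP (· ≤ c) ≤ B.countP (· ≤ c) + 1 := by
  induction hn : A.countP (· < c) using Nat.strong_induction_on generalizing c with
  | _ n ih =>
    rw [A.countP_le_eq_countP_lt_add_count c, B.countP_le_eq_countP_lt_add_count c]
    by_cases hbelow : ∃ a ∈ A, a < c
    swap
    · rw [countP_eq_zero.mpr fun a ha hac => hbelow ⟨a, ha, hac⟩]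
      linarith [hcount c]
    obtain ⟨b, hbA, hbc, hmax⟩ := A.exists_max_of_exists _ hbelow
    have hAc : A.countP (· < c) = A.countP (· ≤ b) :=
      countP_congr rfl fun a ha => propext ⟨hmax a ha, fun h => h.trans_lt hbc⟩
    have hAb := A.countP_le_eq_countP_lt_add_count b
    have ihb := ih _ (by rw [← hn, hAc, hAb]; linarith [one_le_count_iff_mem.mpr hbA]) hbA rfl
    have hBb : B.countP (· ≤ b) ≤ B.countP (· < c) := countP_mono_left fun x hx => hx.trans_lt hbc
    rcases hsep b hbA c hc hbc with ⟨x, hxB, hbx, hxc⟩ | ⟨hcb, hmin⟩ | ⟨hcc, -⟩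
    · have hBx : B.countP (· ≤ b) + 1 ≤ B.countP (· < c) :=
        calc B.countP (· ≤ b) + 1 ≤ B.countP (· < x) + B.count x := by
              gcongr
              · exact countP_mono_left fun y hy => hy.trans_lt hbx
              · exact one_le_count_iff_mem.mpr hxB
          _ = B.countP (· ≤ x) := (B.countP_le_eq_countP_lt_add_count x).symm
          _ ≤ B.countP (· < c) := countP_mono_left fun y hy => hy.trans_lt hxc
      linarith [hcount c]
    · have hAb' : A.countP (· ≤ b) = A.count b := by
        rw [hAb, countP_eq_zero.mpr fun a ha hab => (hmin a ha).not_gt hab, zero_add]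
      have hBb' : B.count b ≤ B.countP (· ≤ b) := by
        rw [B.countP_le_eq_countP_lt_add_count b]
        omega
      linarith [hcount c]
    · linarith

theorem countP_le_countP_add_one_of_antitone {A B : Multiset α}
    (hcount : ∀ c, A.count c ≤ B.count c + 1) (hsep : Separates B A) (p : α → Prop)
    [DecidablePred p] (hp : Antitone p) : A.countP p ≤ B.countP p + 1 := by
  by_cases hex : ∃ a ∈ A, p a
  swap
  · rw [countP_eq_zero.mpr fun a ha hpa => hex ⟨a, ha, hpa⟩]
    omega
  obtain ⟨c, hcA, hpc, hmax⟩ := A.exists_max_of_exists p hex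
  calc A.countP p = A.countP (· ≤ c) :=
        countP_congr rfl fun a ha => propext ⟨hmax a ha, fun h => hp h hpc⟩
    _ ≤ B.countP (· ≤ c) + 1 := countP_le_le_countP_le_add_one hcount hsep hcA
    _ ≤ B.countP p + 1 := by gcongr; exact countP_mono_left fun x hx => hp hx hpc

theorem countP_le_countP_add_one_of_monotone {A B : Multiset α}
    (hcount : ∀ c, A.count c ≤ B.count c + 1) (hsep : Separates B A) (p : α → Prop)
    [DecidablePred p] (hp : Monotone p) : A.countP p ≤ B.countP p + 1 := by
  have hinj : Function.Injective (OrderDual.toDual : α → αᵒᵈ) := OrderDual.toDual.injective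
  have key := countP_le_countP_add_one_of_antitone (A := A.map OrderDual.toDual)
    (B := B.map OrderDual.toDual)
    (fun c => by
      rw [← OrderDual.toDual_ofDual c, count_map_eq_count' _ _ hinj, count_map_eq_count' _ _ hinj]
      exact hcount _)
    hsep.map_toDual (p ∘ OrderDual.ofDual) hp.dual_left
  rw [countP_map, countP_map] at key
  -- `key` differs from the goal only in the decidability instances
  convert key using 2 <;> rw [countP_eq_card_filter] <;> congr

end Multiset

theorem List.getD_le_iff_lt_countP {l : List ℝ} (hl : l.Pairwise (· ≤ ·)) (t : ℝ) {j : ℕ}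
    (hj : j < l.length) : l.getD j 0 ≤ t ↔ j < l.countP (· ≤ t) := by
  induction l generalizing j with
  | nil => simp at hj
  | cons a l ih =>
    rw [List.pairwise_cons] at hl
    by_cases hat : a ≤ t
    · cases j with
      | zero => simp [hat]
      | succ j =>
        rw [List.getD_cons_succ, ih hl.2 (by simpa using hj)]
        simp [hat]
    · have hall : ∀ x ∈ a :: l, ¬ x ≤ t := by
        rintro x (_ | ⟨_, hx⟩)
        exacts [hat, fun hxt => hat ((hl.1 x hx).trans hxt)]
      rw [List.countP_eq_zero.mpr (by simpa using hall), List.getD_eq_getElem _ _ hj]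
      simpa using hall _ (List.getElem_mem hj)

theorem nthRoot_le_iff {f : Polynomial ℝ} (t : ℝ) {j : ℕ} (hj : j < f.roots.card) :
    nthRoot f j ≤ t ↔ j < f.roots.countP (· ≤ t) := by
  conv_rhs => rw [← f.roots.sort_eq (· ≤ ·), Multiset.coe_countP]
  exact List.getD_le_iff_lt_countP (f.roots.pairwise_sort _) t (by simpa using hj)

theorem nthRoot_le_nthRoot_of_countP_le {f g : Polynomial ℝ} {k : ℕ}
    (h : ∀ t, f.roots.countP (· ≤ t) ≤ g.roots.countP (· ≤ t) + k) {i : ℕ}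
    (hi : i + k < f.roots.card) : nthRoot g i ≤ nthRoot f (i + k) := by
  have hf := (nthRoot_le_iff (nthRoot f (i + k)) hi).mp le_rfl
  have hg : i < g.roots.countP (· ≤ nthRoot f (i + k)) := by linarith [h (nthRoot f (i + k))]
  exact (nthRoot_le_iff _ (hg.trans_le (Multiset.countP_le_card _ _))).mpr hg

section MulOp

variable {α : ℝ} {g : Polynomial ℝ}

theorem roots_X_mul_X_add_one_mul (hg : g ≠ 0) :
    (X * (X + 1) * g).roots = 0 ::ₘ (-1) ::ₘ g.roots := by
  have hX1 : (X + 1 : Polynomial ℝ) ≠ 0 := X_add_C_ne_zero 1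
  rw [roots_mul (mul_ne_zero (mul_ne_zero X_ne_zero hX1) hg),
    roots_mul (mul_ne_zero X_ne_zero hX1), roots_X, ← C_1, roots_X_add_C]
  simp only [Multiset.singleton_add, Multiset.cons_add]

theorem card_roots_X_mul_X_add_one_mul (hg : g ≠ 0) :
    (X * (X + 1) * g).roots.card = g.roots.card + 2 := by
  simp [roots_X_mul_X_add_one_mul hg]

theorem mem_Icc_of_mem_roots_X_mul_X_add_one_mul (hg : g ≠ 0)
    (hroots : ∀ x ∈ g.roots, x ∈ Set.Icc (-1 : ℝ) 0) {w : ℝ}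
    (hw : w ∈ (X * (X + 1) * g).roots) : w ∈ Set.Icc (-1 : ℝ) 0 := by
  rw [roots_X_mul_X_add_one_mul hg] at hw
  rcases Multiset.mem_cons.mp hw with rfl | hw
  · norm_num
  rcases Multiset.mem_cons.mp hw with rfl | hw
  · norm_num
  · exact hroots w hw

theorem count_roots_X_mul_X_add_one_mul_le (hg : g ≠ 0) (c : ℝ) :
    (X * (X + 1) * g).roots.count c ≤ g.roots.count c + 1 := by
  rw [roots_X_mul_X_add_one_mul hg, Multiset.count_cons, Multiset.count_cons]
  split_ifs <;> grind

theorem mulOp_eq_derivative_sub (α : ℝ) (g : Polynomial ℝ) :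
    mulOp α g = derivative (X * (X + 1) * g) - (X + C (1 + α)) * g := by
  simp only [mulOp, derivative_mul, derivative_X, derivative_add, derivative_one, C_add, C_1]
  ring

theorem coeff_mulOp_succ (k : ℕ) :
    (mulOp α g).coeff (k + 1) = (k + 1) * g.coeff k + (k + 1 - α) * g.coeff (k + 1) := by
  have h : mulOp α g = X * (X * derivative g + derivative g + g) - C α * g := by
    rw [mulOp]; ring
  rw [h, coeff_sub, coeff_X_mul, coeff_C_mul, coeff_add, coeff_add, coeff_derivative]
  cases k with
  | zero =>
    simp only [mul_coeff_zero, coeff_X_zero, zero_mul, zero_add, CharP.cast_eq_zero, mul_one,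
      one_mul]
    ring
  | succ k =>
    rw [coeff_X_mul, coeff_derivative]
    push_cast
    ring

theorem natDegree_mulOp_le : (mulOp α g).natDegree ≤ g.natDegree + 1 := by
  refine natDegree_le_iff_coeff_eq_zero.mpr fun N hN => ?_
  obtain ⟨k, rfl⟩ : ∃ k, N = k + 1 := ⟨N - 1, by omega⟩
  rw [coeff_mulOp_succ, coeff_eq_zero_of_natDegree_lt (by omega : g.natDegree < k),
    coeff_eq_zero_of_natDegree_lt (by omega : g.natDegree < k + 1)]
  ring

theorem mulOp_ne_zero (hg : g ≠ 0) : mulOp α g ≠ 0 := by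
  intro h
  have := coeff_mulOp_succ (α := α) (g := g) g.natDegree
  rw [h, coeff_zero, coeff_eq_zero_of_natDegree_lt (Nat.lt_succ_self _), mul_zero, add_zero,
    coeff_natDegree] at this
  exact mul_ne_zero (by positivity) (leadingCoeff_ne_zero.mpr hg) this.symm

theorem count_roots_le_count_roots_mulOp_add_one (hg : g ≠ 0) (c : ℝ) :
    (X * (X + 1) * g).roots.count c ≤ (mulOp α g).roots.count c + 1 := by
  set m := (X * (X + 1) * g).roots.count c
  have hdvd_g : (X - C c) ^ (m - 1) ∣ g := by
    rw [← le_rootMultiplicity_iff hg, ← count_roots]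
    have := count_roots_X_mul_X_add_one_mul_le hg c
    omega
  have hdvd_G : (X - C c) ^ (m - 1) ∣ derivative (X * (X + 1) * g) := by
    simp only [m, count_roots]
    exact pow_sub_one_dvd_derivative_of_pow_dvd (pow_rootMultiplicity_dvd _ c)
  have : m - 1 ≤ (mulOp α g).roots.count c := by
    rw [count_roots, le_rootMultiplicity_iff (mulOp_ne_zero hg), mulOp_eq_derivative_sub]
    exact dvd_sub hdvd_G (dvd_mul_of_dvd_right hdvd_g _)
  omega

noncomputable def mulOpWeight (α : ℝ) (g : Polynomial ℝ) (x : ℝ) : ℝ :=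
  (-x) ^ (-α) * (1 + x) ^ (1 + α) * g.eval x

theorem continuous_mulOpWeight (hα : α ∈ Set.Icc (-1 : ℝ) 0) : Continuous (mulOpWeight α g) :=
  (((Real.continuous_rpow_const (by linarith [hα.2])).comp continuous_neg).mul
    ((Real.continuous_rpow_const (by linarith [hα.1])).comp (continuous_const_add 1))).mul
    g.continuous

theorem hasDerivAt_mulOpWeight {x : ℝ} (hx : x ∈ Set.Ioo (-1 : ℝ) 0) :
    HasDerivAt (mulOpWeight α g)
      (-((-x) ^ (-α - 1) * (1 + x) ^ α) * (mulOp α g).eval x) x := by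
  have hneg : 0 < -x := by linarith [hx.2]
  have hpos : 0 < 1 + x := by linarith [hx.1]
  have hA := ((Real.hasDerivAt_rpow_const (p := -α) (Or.inl hneg.ne')).comp x (hasDerivAt_neg x))
  have hB := (Real.hasDerivAt_rpow_const (p := 1 + α) (Or.inl hpos.ne')).comp x
    ((hasDerivAt_id x).const_add 1)
  have hF : HasDerivAt (mulOpWeight α g) _ x := (hA.mul hB).mul (g.hasDerivAt x)
  convert hF using 1
  have e1 : (-x) ^ (-α) = (-x) ^ (-α - 1) * (-x) := by
    rw [← Real.rpow_add_one hneg.ne']; ring_nf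
  have e2 : (1 + x) ^ (1 + α) = (1 + x) ^ α * (1 + x) := by
    rw [← Real.rpow_add_one hpos.ne']; ring_nf
  simp only [Pi.mul_apply, Function.comp_apply, show 1 + α - 1 = α by ring, e1, e2, mulOp,
    eval_add, eval_mul, eval_sub, eval_X, eval_C, eval_one]
  ring

theorem exists_isRoot_mulOp_of_weight_eq_zero (hα : α ∈ Set.Icc (-1 : ℝ) 0) {u v : ℝ}
    (hu : -1 ≤ u) (huv : u < v) (hv : v ≤ 0)
    (hFu : mulOpWeight α g u = 0) (hFv : mulOpWeight α g v = 0) :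
    ∃ x ∈ Set.Ioo u v, (mulOp α g).IsRoot x := by
  obtain ⟨x, hx, hdx⟩ := exists_deriv_eq_zero huv (continuous_mulOpWeight hα).continuousOn
    (hFu.trans hFv.symm)
  have hx' : x ∈ Set.Ioo (-1 : ℝ) 0 := ⟨hu.trans_lt hx.1, hx.2.trans_le hv⟩
  rw [(hasDerivAt_mulOpWeight hx').deriv] at hdx
  have hw : 0 < (-x) ^ (-α - 1) * (1 + x) ^ α :=
    mul_pos (Real.rpow_pos_of_pos (by linarith [hx'.2]) _)
      (Real.rpow_pos_of_pos (by linarith [hx'.1]) _)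
  exact ⟨x, hx, (mul_eq_zero.mp hdx).resolve_left (neg_ne_zero.mpr hw.ne')⟩

theorem mulOpWeight_eq_zero_or (hg : g ≠ 0) {w : ℝ} (hw : w ∈ (X * (X + 1) * g).roots) :
    mulOpWeight α g w = 0 ∨
      (w = -1 ∨ w = 0) ∧ (X * (X + 1) * g).roots.count w ≤ (mulOp α g).roots.count w := by
  by_cases hgw : g.IsRoot w
  · simp [mulOpWeight, hgw.eq_zero]
  have hw' : w = -1 ∨ w = 0 := by
    rw [roots_X_mul_X_add_one_mul hg] at hw
    rcases Multiset.mem_cons.mp hw with h | h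
    · exact Or.inr h
    rcases Multiset.mem_cons.mp h with h | h
    · exact Or.inl h
    · exact absurd (isRoot_of_mem_roots h) hgw
  by_cases hFw : mulOpWeight α g w = 0
  · exact Or.inl hFw
  refine Or.inr ⟨hw', ?_⟩
  have hαw : α = w := by
    by_contra hne
    apply hFw
    rcases hw' with rfl | rfl
    · simp [mulOpWeight, Real.zero_rpow (show 1 + α ≠ 0 by contrapose! hne; linarith)]
    · simp [mulOpWeight, Real.zero_rpow (show -α ≠ 0 by contrapose! hne; linarith)]
  have hroot : (mulOp α g).IsRoot w := by
    rcases hw' with rfl | rfl <;> simp [mulOp, hαw]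
  have := count_roots_X_mul_X_add_one_mul_le hg w
  rw [Multiset.count_eq_zero.mpr (fun h => hgw (isRoot_of_mem_roots h))] at this
  have := (Multiset.one_le_count_iff_mem.mpr ((mem_roots (mulOp_ne_zero hg)).mpr hroot))
  omega

theorem separates_roots_mulOp (hα : α ∈ Set.Icc (-1 : ℝ) 0) (hg : g ≠ 0)
    (hroots : ∀ x ∈ g.roots, x ∈ Set.Icc (-1 : ℝ) 0) :
    (mulOp α g).roots.Separates (X * (X + 1) * g).roots := by
  intro u hu v hv huv
  have hIcc := fun a (ha : a ∈ (X * (X + 1) * g).roots) =>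
    mem_Icc_of_mem_roots_X_mul_X_add_one_mul hg hroots ha
  rcases mulOpWeight_eq_zero_or (α := α) hg hu with hFu | ⟨hu', hcu⟩
  · rcases mulOpWeight_eq_zero_or (α := α) hg hv with hFv | ⟨hv', hcv⟩
    · obtain ⟨x, hx, hroot⟩ := exists_isRoot_mulOp_of_weight_eq_zero hα (hIcc u hu).1 huv
        (hIcc v hv).2 hFu hFv
      exact Or.inl ⟨x, (mem_roots (mulOp_ne_zero hg)).mpr hroot, hx⟩
    · obtain rfl : v = 0 := hv'.resolve_left (by linarith [(hIcc u hu).1])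
      exact Or.inr (Or.inr ⟨hcv, fun a ha => (hIcc a ha).2⟩)
  · obtain rfl : u = -1 := hu'.resolve_right (by linarith [(hIcc v hv).2])
    exact Or.inr (Or.inl ⟨hcu, fun a ha => (hIcc a ha).1⟩)

theorem countP_roots_X_mul_X_add_one_mul_le_of_antitone (hα : α ∈ Set.Icc (-1 : ℝ) 0) (hg : g ≠ 0)
    (hroots : ∀ x ∈ g.roots, x ∈ Set.Icc (-1 : ℝ) 0) (p : ℝ → Prop) [DecidablePred p]
    (hp : Antitone p) :
    (X * (X + 1) * g).roots.countP p ≤ (mulOp α g).roots.countP p + 1 :=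
  Multiset.countP_le_countP_add_one_of_antitone (count_roots_le_count_roots_mulOp_add_one hg)
    (separates_roots_mulOp hα hg hroots) p hp

theorem countP_roots_X_mul_X_add_one_mul_le_of_monotone (hα : α ∈ Set.Icc (-1 : ℝ) 0)
    (hg : g ≠ 0) (hroots : ∀ x ∈ g.roots, x ∈ Set.Icc (-1 : ℝ) 0) (p : ℝ → Prop)
    [DecidablePred p] (hp : Monotone p) :
    (X * (X + 1) * g).roots.countP p ≤ (mulOp α g).roots.countP p + 1 :=
  Multiset.countP_le_countP_add_one_of_monotone
    (count_roots_le_count_roots_mulOp_add_one hg) (separates_roots_mulOp hα hg hroots) p hp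

theorem natDegree_add_one_le_countP_roots_mulOp (hα : α ∈ Set.Icc (-1 : ℝ) 0) (hg : g ≠ 0)
    (hreal : AllRootsReal g) (hroots : ∀ x ∈ g.roots, x ∈ Set.Icc (-1 : ℝ) 0) :
    g.natDegree + 1 ≤ (mulOp α g).roots.countP (· ≤ 0) ∧
      g.natDegree + 1 ≤ (mulOp α g).roots.countP (-1 ≤ ·) := by
  have hIcc := fun a (ha : a ∈ (X * (X + 1) * g).roots) =>
    mem_Icc_of_mem_roots_X_mul_X_add_one_mul hg hroots ha
  have hle := countP_roots_X_mul_X_add_one_mul_le_of_antitone hα hg hroots (· ≤ 0)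
    fun _ _ hxy hy => hxy.trans hy
  have hge := countP_roots_X_mul_X_add_one_mul_le_of_monotone hα hg hroots (-1 ≤ ·)
    fun _ _ hxy hx => hx.trans hxy
  rw [Multiset.countP_eq_card.mpr fun a ha => (hIcc a ha).2, card_roots_X_mul_X_add_one_mul hg,
    hreal] at hle
  rw [Multiset.countP_eq_card.mpr fun a ha => (hIcc a ha).1, card_roots_X_mul_X_add_one_mul hg,
    hreal] at hge
  omega

theorem card_roots_mulOp (hα : α ∈ Set.Icc (-1 : ℝ) 0) (hg : g ≠ 0)
    (hreal : AllRootsReal g) (hroots : ∀ x ∈ g.roots, x ∈ Set.Icc (-1 : ℝ) 0) :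
    (mulOp α g).roots.card = g.natDegree + 1 := by
  have := (natDegree_add_one_le_countP_roots_mulOp hα hg hreal hroots).1
  have := Multiset.countP_le_card (· ≤ 0) (mulOp α g).roots
  have := card_roots' (mulOp α g)
  have := natDegree_mulOp_le (α := α) (g := g)
  omega

theorem allRootsReal_mulOp (hα : α ∈ Set.Icc (-1 : ℝ) 0) (hg : g ≠ 0)
    (hreal : AllRootsReal g) (hroots : ∀ x ∈ g.roots, x ∈ Set.Icc (-1 : ℝ) 0) :
    AllRootsReal (mulOp α g) := by
  have := card_roots' (mulOp α g)
  have := natDegree_mulOp_le (α := α) (g := g)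
  have := card_roots_mulOp hα hg hreal hroots
  unfold AllRootsReal
  omega

theorem mem_Icc_of_mem_roots_mulOp (hα : α ∈ Set.Icc (-1 : ℝ) 0) (hg : g ≠ 0)
    (hreal : AllRootsReal g) (hroots : ∀ x ∈ g.roots, x ∈ Set.Icc (-1 : ℝ) 0) :
    ∀ x ∈ (mulOp α g).roots, x ∈ Set.Icc (-1 : ℝ) 0 := by
  obtain ⟨hle, hge⟩ := natDegree_add_one_le_countP_roots_mulOp hα hg hreal hroots
  have hcard := card_roots_mulOp hα hg hreal hroots
  have hle' := Multiset.countP_eq_card.mp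
    (le_antisymm (Multiset.countP_le_card _ _) (hcard ▸ hle))
  have hge' := Multiset.countP_eq_card.mp
    (le_antisymm (Multiset.countP_le_card _ _) (hcard ▸ hge))
  exact fun x hx => ⟨hge' x hx, hle' x hx⟩

theorem countP_roots_le_countP_roots_mulOp (hα : α ∈ Set.Icc (-1 : ℝ) 0) (hg : g ≠ 0)
    (hroots : ∀ x ∈ g.roots, x ∈ Set.Icc (-1 : ℝ) 0) (p : ℝ → Prop) [DecidablePred p]
    (hp : Antitone p) : g.roots.countP p ≤ (mulOp α g).roots.countP p := by
  have h := countP_roots_X_mul_X_add_one_mul_le_of_antitone hα hg hroots p hp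
  rw [roots_X_mul_X_add_one_mul hg, Multiset.countP_cons, Multiset.countP_cons] at h
  by_cases hp1 : p (-1)
  · simp only [hp1, if_true] at h
    omega
  · rw [Multiset.countP_eq_zero.mpr fun x hx hpx => hp1 (hp (hroots x hx).1 hpx)]
    omega

theorem countP_roots_mulOp_le_countP_roots_add_one (hα : α ∈ Set.Icc (-1 : ℝ) 0) (hg : g ≠ 0)
    (hreal : AllRootsReal g) (hroots : ∀ x ∈ g.roots, x ∈ Set.Icc (-1 : ℝ) 0) (p : ℝ → Prop)
    [DecidablePred p] (hp : Antitone p) :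
    (mulOp α g).roots.countP p ≤ g.roots.countP p + 1 := by
  have hq := countP_roots_X_mul_X_add_one_mul_le_of_monotone hα hg hroots (¬ p ·)
    fun _ _ hxy hx hy => hx (hp hxy hy)
  have hh := Multiset.card_eq_countP_add_countP p (mulOp α g).roots
  have hg' := Multiset.card_eq_countP_add_countP p g.roots
  rw [card_roots_mulOp hα hg hreal hroots] at hh
  unfold AllRootsReal at hreal
  by_cases hp0 : p 0
  · rw [Multiset.countP_eq_zero (p := (¬ p ·)).mpr
      fun x hx hnpx => hnpx (hp (hroots x hx).2 hp0)] at hg'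
    omega
  · rw [roots_X_mul_X_add_one_mul hg, Multiset.countP_cons, Multiset.countP_cons] at hq
    simp only [hp0, not_false_eq_true, if_true] at hq
    omega

theorem interlaces_mulOp (hα : α ∈ Set.Icc (-1 : ℝ) 0) (hg : g ≠ 0)
    (hreal : AllRootsReal g) (hroots : ∀ x ∈ g.roots, x ∈ Set.Icc (-1 : ℝ) 0) :
    Interlaces g (mulOp α g) := by
  refine ⟨⟨hg, hreal⟩, ⟨mulOp_ne_zero hg, allRootsReal_mulOp hα hg hreal hroots⟩, ?_,
    fun i hi => ⟨?_, ?_⟩⟩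
  · rw [card_roots_mulOp hα hg hreal hroots, hreal]
  · exact nthRoot_le_nthRoot_of_countP_le (k := 0)
      (fun t => countP_roots_le_countP_roots_mulOp hα hg hroots _ fun _ _ hxy hy => hxy.trans hy)
      hi
  · refine nthRoot_le_nthRoot_of_countP_le (k := 1) (fun t =>
      countP_roots_mulOp_le_countP_roots_add_one hα hg hreal hroots _
        fun _ _ hxy hy => hxy.trans hy) ?_
    rw [card_roots_mulOp hα hg hreal hroots, ← hreal]
    omega

theorem rootMultiplicity_mulOp_le_one (hα : α ∈ Set.Icc (-1 : ℝ) 0) (hg : g ≠ 0) {c : ℝ}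
    (hc : g.rootMultiplicity c = 1) : (mulOp α g).rootMultiplicity c ≤ 1 := by
  by_contra! hlt
  obtain ⟨hroot, hdroot⟩ := (one_lt_rootMultiplicity_iff_isRoot (mulOp_ne_zero hg)).mp hlt
  have hgc : g.IsRoot c := (rootMultiplicity_pos hg).mp (by omega)
  have hg'c : (derivative g).eval c ≠ 0 := fun h => by
    have := (one_lt_rootMultiplicity_iff_isRoot hg).mpr ⟨hgc, h⟩
    omega
  simp only [mulOp, IsRoot.def, eval_add, eval_mul, eval_X, eval_one, eval_sub, eval_C,
    hgc.eq_zero, mul_zero, add_zero, mul_eq_zero, hg'c, or_false] at hroot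
  simp only [mulOp, derivative_add, derivative_mul, derivative_X, one_mul, derivative_one, add_zero,
    mul_one, derivative_sub, derivative_C, sub_zero, IsRoot.def, eval_add, eval_mul, eval_X,
    eval_one, hgc.eq_zero, eval_sub, eval_C, zero_add] at hdroot
  have hcoef : c + 1 + c + (c - α) ≠ 0 := by
    rcases hroot with rfl | h
    · linarith [hα.2]
    · linarith [hα.1]
  have hc' : c * (c + 1) = 0 := by rcases hroot with h | h <;> simp [h]
  rw [hc', zero_mul, add_zero, ← add_mul] at hdroot
  exact hg'c ((mul_eq_zero.mp hdroot).resolve_left hcoef)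

theorem nodup_roots_mulOp (hα : α ∈ Set.Icc (-1 : ℝ) 0) (hg : g ≠ 0)
    (hreal : AllRootsReal g) (hroots : ∀ x ∈ g.roots, x ∈ Set.Icc (-1 : ℝ) 0)
    (hnodup : g.roots.Nodup) : (mulOp α g).roots.Nodup := by
  rw [Multiset.nodup_iff_count_le_one] at hnodup ⊢
  intro c
  have hle := countP_roots_mulOp_le_countP_roots_add_one hα hg hreal hroots (· ≤ c)
    fun _ _ hxy hy => hxy.trans hy
  have hlt := countP_roots_le_countP_roots_mulOp hα hg hroots (· < c)
    fun _ _ hxy hy => hxy.trans_lt hy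
  rw [Multiset.countP_le_eq_countP_lt_add_count, Multiset.countP_le_eq_countP_lt_add_count] at hle
  rcases Nat.le_one_iff_eq_zero_or_eq_one.mp (hnodup c) with h0 | h1
  · omega
  · rw [count_roots] at h1 ⊢
    exact rootMultiplicity_mulOp_le_one hα hg h1

end MulOp

/-- Lemma: let `α ∈ [-1,0]` and suppose `𝓔(f)` is nonzero with all zeros in `[-1,0]`.
Then `𝓔((x-α)f)` has all zeros in `[-1,0]` and `𝓔(f)` interlaces `𝓔((x-α)f)`.
If moreover `𝓔(f)` has only simple zeros, then so does `𝓔((x-α)f)`. -/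
theorem stmt10 (E : Polynomial ℝ →ₗ[ℝ] Polynomial ℝ)
    (hE : ∀ i : ℕ, E (binomPoly i) = X ^ i)
    (α : ℝ) (hα : α ∈ Set.Icc (-1 : ℝ) 0) (f : Polynomial ℝ)
    (hne : E f ≠ 0) (hreal : AllRootsReal (E f))
    (hroots : ∀ x ∈ (E f).roots, x ∈ Set.Icc (-1 : ℝ) 0) :
    AllRootsReal (E ((X - C α) * f)) ∧
    (∀ x ∈ (E ((X - C α) * f)).roots, x ∈ Set.Icc (-1 : ℝ) 0) ∧
    Interlaces (E f) (E ((X - C α) * f)) ∧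
    ((E f).roots.Nodup → (E ((X - C α) * f)).roots.Nodup) := by
  rw [E_X_sub_C_mul E hE]
  exact ⟨allRootsReal_mulOp hα hne hreal hroots, mem_Icc_of_mem_roots_mulOp hα hne hreal hroots,
    interlaces_mulOp hα hne hreal hroots, nodup_roots_mulOp hα hne hreal hroots⟩
end

section
/- Let f ∈ ℝ[x] be a nonzero polynomial of degree d, and let W(f) be the unique polynomial satisfying the formal power series identity Σ_{i≥0} f(i) x^i = W(f)(x)/(1−x)^{d+1}. Then deg W(f) = d − m, where m is the multiplicity of −1 as a zero of 𝓔(f). Moreover, m equals the largest integer k such that the product (x+1)(x+2)···(x+k) divides f. -/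
/-!
Write `f = ∑ⱼ cⱼ Aⱼ` in the basis `Aⱼ = C(x + j, j) = (x + 1)⋯(x + j) / j!`. Vandermonde's
identity `C(x + j, j) = ∑ᵢ C(j, i) C(x, i)` gives `𝓔(Aⱼ) = (x + 1)ʲ`, so `𝓔(f) = c(x + 1)` and
`m` is the trailing degree of the coordinate polynomial `c`. Since `∑ₙ C(n + j, j) xⁿ` is
`(1 - x)^-(j+1)`, `W(f) = ∑ⱼ cⱼ (1 - x)^(d - j)` is the reflection of `c` composed with `1 - x`,
of degree `d - m`. Every `Aⱼ` with `j ≥ m` is divisible by `(x + 1)⋯(x + m)`; at `x = -(m + 1)`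
all `Aⱼ` with `j > m` vanish but `Aₘ` does not, so `f(-(m + 1)) ≠ 0`, which bounds every `k`
with `(x + 1)⋯(x + k) ∣ f`.
-/

open Polynomial

open Finset

noncomputable def risingPoly (k : ℕ) : ℝ[X] := ∏ j ∈ range k, (X + C ((j : ℝ) + 1))

/-- The binomial polynomial `C(x + j, j)`. -/
noncomputable def shiftedBinomPoly (j : ℕ) : ℝ[X] := C ((j.factorial : ℝ))⁻¹ * risingPoly j

lemma monic_risingPoly (k : ℕ) : (risingPoly k).Monic :=
  monic_prod_of_monic _ _ fun _ _ => monic_X_add_C _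

lemma natDegree_risingPoly (k : ℕ) : (risingPoly k).natDegree = k := by
  rw [risingPoly, natDegree_prod_of_monic _ _ fun _ _ => monic_X_add_C _]
  simp only [natDegree_X_add_C, sum_const, card_range, smul_eq_mul, mul_one]

lemma risingPoly_dvd_risingPoly {k j : ℕ} (h : k ≤ j) : risingPoly k ∣ risingPoly j := by
  rw [risingPoly, risingPoly, ← prod_range_mul_prod_Ico _ h]
  exact dvd_mul_right _ _

lemma eval_natCast_risingPoly (k n : ℕ) :
    (risingPoly k).eval (n : ℝ) = k.factorial * (n + k).choose k := by
  have h := Nat.ascFactorial_eq_factorial_mul_choose n k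
  rw [Nat.ascFactorial_eq_prod_range] at h
  rw [risingPoly, eval_prod]
  simp only [eval_add, eval_X, eval_C]
  exact_mod_cast (prod_congr rfl fun l _ => by ring).trans h

lemma risingPoly_eval_neg_eq_zero_iff (k n : ℕ) :
    (risingPoly k).eval (-((n : ℝ) + 1)) = 0 ↔ n < k := by
  rw [risingPoly, eval_prod, prod_eq_zero_iff]
  simp only [eval_add, eval_X, eval_C, mem_range]
  constructor
  · rintro ⟨l, hl, h⟩
    have : l = n := by exact_mod_cast (by linarith : (l : ℝ) = n)
    exact this ▸ hl
  · exact fun h => ⟨n, h, by ring⟩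

lemma degree_shiftedBinomPoly (j : ℕ) : (shiftedBinomPoly j).degree = j := by
  rw [shiftedBinomPoly, degree_C_mul (by positivity),
    degree_eq_natDegree (monic_risingPoly j).ne_zero, natDegree_risingPoly]

lemma eval_natCast_shiftedBinomPoly (j n : ℕ) :
    (shiftedBinomPoly j).eval (n : ℝ) = (j + n).choose j := by
  rw [shiftedBinomPoly, eval_mul, eval_C, eval_natCast_risingPoly, add_comm j n]
  field_simp

lemma eval_natCast_binomPoly (i n : ℕ) : (binomPoly i).eval (n : ℝ) = n.choose i := by
  rw [binomPoly, eval_mul, eval_C, eval_prod]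
  simp only [eval_sub, eval_X, eval_C]
  rw [← descPochhammer_eval_eq_prod_range, descPochhammer_eval_eq_descFactorial,
    Nat.descFactorial_eq_factorial_mul_choose]
  push_cast
  field_simp

lemma eq_of_eval_natCast_eq {R : Type*} [CommRing R] [IsDomain R] [CharZero R] {p q : R[X]}
    (h : ∀ n : ℕ, p.eval (n : R) = q.eval (n : R)) : p = q :=
  eq_of_infinite_eval_eq p q <| (Set.infinite_range_of_injective Nat.cast_injective).mono <| by
    rintro _ ⟨n, rfl⟩
    exact h n

lemma shiftedBinomPoly_eq_sum_binomPoly (j : ℕ) :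
    shiftedBinomPoly j = ∑ i ∈ range (j + 1), (j.choose i : ℝ) • binomPoly i := by
  refine eq_of_eval_natCast_eq fun n => ?_
  have vandermonde : (j + n).choose j = ∑ i ∈ range (j + 1), j.choose i * n.choose i := by
    rw [add_comm, Nat.add_choose_eq, Nat.sum_antidiagonal_eq_sum_range_succ_mk]
    refine sum_congr rfl fun i hi => ?_
    rw [Nat.choose_symm (mem_range_succ_iff.mp hi), mul_comm]
  simp only [eval_natCast_shiftedBinomPoly, eval_finsetSum, eval_smul, eval_natCast_binomPoly,
    vandermonde, smul_eq_mul]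
  push_cast
  rfl

lemma map_shiftedBinomPoly (E : ℝ[X] →ₗ[ℝ] ℝ[X]) (hE : ∀ i : ℕ, E (binomPoly i) = X ^ i) (j : ℕ) :
    E (shiftedBinomPoly j) = (X + 1) ^ j := by
  rw [shiftedBinomPoly_eq_sum_binomPoly, map_sum, add_pow]
  refine sum_congr rfl fun i _ => ?_
  rw [map_smul, hE, one_pow, mul_one, ← C_eq_natCast, smul_eq_C_mul, mul_comm]

lemma exists_eq_sum_shiftedBinomPoly {f : ℝ[X]} {d : ℕ} (hf : f.natDegree ≤ d) :
    ∃ c : ℝ[X], c.natDegree ≤ d ∧ f = ∑ j ∈ range (d + 1), c.coeff j • shiftedBinomPoly j := by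
  let S : Sequence ℝ := ⟨shiftedBinomPoly, degree_shiftedBinomPoly⟩
  have hspan := S.span_degreeLT (m := d + 1) fun i _ =>
    (leadingCoeff_ne_zero.mpr (S.ne_zero i)).isUnit
  have hmem : f ∈ Submodule.span ℝ (S '' ↑(range (d + 1))) := by
    rw [coe_range, hspan, mem_degreeLT]
    exact (degree_le_natDegree.trans (Nat.cast_le.mpr hf)).trans_lt
      (by exact_mod_cast d.lt_succ_self)
  obtain ⟨a, ha⟩ := (Submodule.mem_span_image_finset_iff_exists_fun' ℝ).mp hmem
  refine ⟨∑ j ∈ range (d + 1), C (a j) * X ^ j, ?_, ?_⟩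
  · exact natDegree_sum_le_of_forall_le _ _ fun j hj =>
      (natDegree_C_mul_X_pow_le _ _).trans (mem_range_succ_iff.mp hj)
  · rw [← ha]
    refine sum_congr rfl fun j hj => ?_
    simp only [finsetSum_coeff, coeff_C_mul, coeff_X_pow, mul_ite, mul_one, mul_zero, sum_ite_eq,
      hj, ↓reduceIte]
    rfl

lemma map_sum_shiftedBinomPoly (E : ℝ[X] →ₗ[ℝ] ℝ[X]) (hE : ∀ i : ℕ, E (binomPoly i) = X ^ i)
    {c : ℝ[X]} {d : ℕ} (hc : c.natDegree ≤ d) :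
    E (∑ j ∈ range (d + 1), c.coeff j • shiftedBinomPoly j) = c.comp (X + 1) := by
  conv_rhs => rw [c.as_sum_range_C_mul_X_pow' (Nat.lt_succ_of_le hc), Polynomial.sum_comp]
  refine (map_sum E _ _).trans (sum_congr rfl fun j _ => ?_)
  rw [map_smul, map_shiftedBinomPoly E hE, mul_comp, C_comp, X_pow_comp, smul_eq_C_mul]

lemma rootMultiplicity_neg_comp_X_add_C {R : Type*} [CommRing R] (p : R[X]) (a : R) :
    (p.comp (X + C a)).rootMultiplicity (-a) = p.natTrailingDegree := by
  rw [rootMultiplicity_eq_natTrailingDegree, comp_assoc]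
  simp

lemma natDegree_reflect_of_natDegree_le {R : Type*} [Semiring R] {p : R[X]} {N : ℕ} (hp : p ≠ 0)
    (hN : p.natDegree ≤ N) : (reflect N p).natDegree = N - p.natTrailingDegree := by
  have htrail := natTrailingDegree_le_natDegree (p := p)
  apply natDegree_eq_of_le_of_coeff_ne_zero
  · rw [natDegree_le_iff_coeff_eq_zero]
    intro i hi
    rw [coeff_reflect]
    rcases le_or_gt i N with hiN | hiN
    · exact coeff_eq_zero_of_lt_natTrailingDegree (by rw [revAt_le hiN]; omega)
    · exact coeff_eq_zero_of_natDegree_lt (by rw [revAt_eq_self_of_lt hiN]; omega)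
  · rw [coeff_reflect, revAt_le (by omega), Nat.sub_sub_self (htrail.trans hN)]
    exact mt trailingCoeff_eq_zero.mp hp

lemma reflect_comp_eq_sum {R : Type*} [CommSemiring R] {p : R[X]} {N : ℕ} (hN : p.natDegree ≤ N)
    (q : R[X]) : (reflect N p).comp q = ∑ j ∈ range (N + 1), C (p.coeff j) * q ^ (N - j) := by
  refine induction_with_natDegree_le
    (fun p => (reflect N p).comp q = ∑ j ∈ range (N + 1), C (p.coeff j) * q ^ (N - j)) N
    (by simp) (fun n a _ hn => ?_) (fun f g _ _ hf hg => ?_) p hN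
  · have hn' : n < N + 1 := Nat.lt_succ_of_le hn
    simp [revAt_le hn, apply_ite C, ite_mul, hn']
  · rw [reflect_add, add_comp, hf, hg, ← sum_add_distrib]
    simp only [coeff_add, C_add, add_mul]

lemma mk_eval_sum_shiftedBinomPoly_mul_one_sub_pow {c : ℝ[X]} {d : ℕ} (hc : c.natDegree ≤ d) :
    PowerSeries.mk (fun n : ℕ => (∑ j ∈ range (d + 1), c.coeff j • shiftedBinomPoly j).eval (n : ℝ))
        * (1 - PowerSeries.X) ^ (d + 1)
      = ((reflect d c).comp (1 - X) : PowerSeries ℝ) := by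
  have hmk : PowerSeries.mk (fun n : ℕ =>
        (∑ j ∈ range (d + 1), c.coeff j • shiftedBinomPoly j).eval (n : ℝ))
      = ∑ j ∈ range (d + 1),
          PowerSeries.C (c.coeff j) * PowerSeries.mk (fun n => ((j + n).choose j : ℝ)) := by
    ext n
    simp [eval_finsetSum, eval_natCast_shiftedBinomPoly, map_sum, PowerSeries.coeff_C_mul]
  rw [hmk, sum_mul, reflect_comp_eq_sum hc, ← coeToPowerSeries.ringHom_apply, map_sum]
  refine sum_congr rfl fun j hj => ?_
  rw [show d + 1 = (j + 1) + (d - j) by have := mem_range_succ_iff.mp hj; omega, pow_add,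
    mul_assoc, ← mul_assoc (PowerSeries.mk _), PowerSeries.mk_add_choose_mul_one_sub_pow_eq_one,
    one_mul, coeToPowerSeries.ringHom_apply]
  simp [Polynomial.coe_pow, coe_C]

lemma risingPoly_dvd_sum_shiftedBinomPoly (c : ℝ[X]) (d : ℕ) :
    risingPoly c.natTrailingDegree ∣ ∑ j ∈ range (d + 1), c.coeff j • shiftedBinomPoly j := by
  refine dvd_sum fun j _ => ?_
  rcases lt_or_ge j c.natTrailingDegree with hj | hj
  · simp [coeff_eq_zero_of_lt_natTrailingDegree hj]
  · rw [smul_eq_C_mul, shiftedBinomPoly]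
    exact dvd_mul_of_dvd_right (dvd_mul_of_dvd_right (risingPoly_dvd_risingPoly hj) _) _

lemma eval_sum_shiftedBinomPoly_ne_zero {c : ℝ[X]} {d : ℕ} (hc : c ≠ 0) (hcd : c.natDegree ≤ d) :
    (∑ j ∈ range (d + 1), c.coeff j • shiftedBinomPoly j).eval (-((c.natTrailingDegree : ℝ) + 1))
      ≠ 0 := by
  set μ := c.natTrailingDegree
  have hvanish : ∀ j ≠ μ, c.coeff j * (shiftedBinomPoly j).eval (-((μ : ℝ) + 1)) = 0 := by
    intro j hj
    rcases lt_or_gt_of_ne hj with hlt | hgt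
    · rw [coeff_eq_zero_of_lt_natTrailingDegree hlt, zero_mul]
    · rw [shiftedBinomPoly, eval_mul, (risingPoly_eval_neg_eq_zero_iff j μ).mpr hgt, mul_zero,
        mul_zero]
  rw [eval_finsetSum]
  simp only [eval_smul, smul_eq_mul]
  have hμd : μ ∈ range (d + 1) :=
    mem_range_succ_iff.mpr ((natTrailingDegree_le_natDegree (p := c)).trans hcd)
  rw [sum_eq_single μ (fun j _ hj => hvanish j hj) (absurd hμd), shiftedBinomPoly, eval_mul,
    eval_C]
  refine mul_ne_zero (mt trailingCoeff_eq_zero.mp hc) (mul_ne_zero (by positivity) ?_)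
  exact fun h => lt_irrefl μ ((risingPoly_eval_neg_eq_zero_iff μ μ).mp h)

lemma le_of_risingPoly_dvd {f : ℝ[X]} {k n : ℕ} (hk : risingPoly k ∣ f)
    (hn : f.eval (-((n : ℝ) + 1)) ≠ 0) : k ≤ n := by
  by_contra! hnk
  obtain ⟨g, rfl⟩ := hk
  exact hn (by rw [eval_mul, (risingPoly_eval_neg_eq_zero_iff k n).mpr hnk, zero_mul])

/-- Lemma: let `f ≠ 0` have degree `d`, let `W(f)` be defined by the formal power
series identity `Σ_{i≥0} f(i) x^i = W(f)(x)/(1-x)^{d+1}`, and let `m` be the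
multiplicity of `-1` as a zero of `𝓔(f)`. Then `deg W(f) = d - m`, and `m` is the
largest integer `k` such that `(x+1)(x+2)⋯(x+k)` divides `f`. -/
theorem stmt19 (E : Polynomial ℝ →ₗ[ℝ] Polynomial ℝ)
    (hE : ∀ i : ℕ, E (binomPoly i) = X ^ i)
    (f : Polynomial ℝ) (hf : f ≠ 0) (d : ℕ) (hd : f.natDegree = d)
    (P : Polynomial ℝ)
    (hP : (PowerSeries.mk fun i => f.eval (i : ℝ)) * (1 - PowerSeries.X) ^ (d + 1)
      = (P : PowerSeries ℝ))
    (m : ℕ) (hm : m = (E f).rootMultiplicity (-1)) :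
    P.natDegree = d - m ∧
    (∏ j ∈ Finset.range m, (X + C ((j : ℝ) + 1))) ∣ f ∧
    (∀ k : ℕ, (∏ j ∈ Finset.range k, (X + C ((j : ℝ) + 1))) ∣ f → k ≤ m) := by
  obtain ⟨c, hcd, rfl⟩ := exists_eq_sum_shiftedBinomPoly hd.le
  have hc : c ≠ 0 := by
    rintro rfl
    simp at hf
  have hmc : m = c.natTrailingDegree := by
    rw [hm, map_sum_shiftedBinomPoly E hE hcd]
    simpa using rootMultiplicity_neg_comp_X_add_C c 1
  have hPc : P = (reflect d c).comp (1 - X) :=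
    coe_inj.mp (hP.symm.trans (mk_eval_sum_shiftedBinomPoly_mul_one_sub_pow hcd))
  subst hmc
  refine ⟨?_, risingPoly_dvd_sum_shiftedBinomPoly c d, fun k hk => le_of_risingPoly_dvd hk
    (eval_sum_shiftedBinomPoly_ne_zero hc hcd)⟩
  rw [hPc, natDegree_comp, natDegree_reflect_of_natDegree_le hc hcd, ← neg_sub, natDegree_neg,
    ← C_1, natDegree_X_sub_C, mul_one]
end
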